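/- arXiv:math/0607494 — 9 statements merged into one kernel-verified Lean document; each statement's English description precedes it below -/
import Mathlib

section
/- For all positive integers d₁,…,d_g one has ρ(d₁,…,d_g) = Σ_{b ∣ ψ(d₁,…,d_g)} ρ*(d₁/gcd(d₁,b²),…,d_g/gcd(d_g,b²)) · (gcd(d₁,b²)·gcd(d₂,b²)⋯gcd(d_g,b²))² / b², where the sum ranges over the positive divisors b of ψ(d₁,…,d_g). -/
open Finset

/-- The binary quadratic form `q_i(x,y) = a_i x^2 + 2 b_i x y + c_i y^2`. -/
def qf {g : ℕ} (a b c : Fin g → ℤ) (i : Fin g) (x : ℤ × ℤ) : ℤ :=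
  a i * x.1 ^ 2 + 2 * b i * x.1 * x.2 + c i * x.2 ^ 2

/-- The resolvent of two binary quadratic forms. -/
def res₂ (a₁ b₁ c₁ a₂ b₂ c₂ : ℤ) : ℤ :=
  (a₁ * c₂ - a₂ * c₁) ^ 2 - 4 * (b₁ * c₂ - b₂ * c₁) * (a₁ * b₂ - a₂ * b₁)

/-- The quantity `D`. -/
def Dconst (g : ℕ) (a b c : Fin g → ℤ) : ℤ :=
  (∏ p ∈ (Finset.range (2 * g + 1)).filter Nat.Prime, (p : ℤ)) *
    (∏ k, a k * c k * (b k ^ 2 - a k * c k)) *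
    ∏ i, ∏ j ∈ Finset.Ioi i, res₂ (a i) (b i) (c i) (a j) (b j) (c j)

/-- `ρ(d₁,…,d_g)`. -/
def rho (g : ℕ) (a b c : Fin g → ℤ) (d : Fin g → ℕ) : ℕ :=
  (((Finset.range (∏ i, d i)) ×ˢ (Finset.range (∏ i, d i))).filter
    (fun x => ∀ i, (d i : ℤ) ∣ qf a b c i ((x.1 : ℤ), (x.2 : ℤ)))).card

/-- `ρ*(d₁,…,d_g)`. -/
def rhostar (g : ℕ) (a b c : Fin g → ℤ) (d : Fin g → ℕ) : ℕ :=
  (((Finset.range (∏ i, d i)) ×ˢ (Finset.range (∏ i, d i))).filter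
    (fun x => (∀ i, (d i : ℤ) ∣ qf a b c i ((x.1 : ℤ), (x.2 : ℤ))) ∧
      Nat.gcd (Nat.gcd x.1 x.2) (∏ i, d i) = 1)).card

/-- `ψ(d₁,…,d_g) = ∏_p p^{⌈max_i v_p(d_i)/2⌉}`. -/
def psi (g : ℕ) (d : Fin g → ℕ) : ℕ :=
  ∏ p ∈ (∏ i, d i).primeFactors,
    p ^ (((Finset.univ.sup fun i => (d i).factorization p) + 1) / 2)

/-! Sort the points `x` by `e = gcd(x₁, x₂, ψ)` and write `x = e • y`. Since `qᵢ(e • y) = e² qᵢ(y)`,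
the congruences become `dᵢ' ∣ qᵢ(y)` with `dᵢ' = dᵢ / gcd(dᵢ, e²)`, and `gcd(y₁, y₂, ψ / e) = 1`
becomes `gcd(y₁, y₂, ∏ dᵢ') = 1` because `ψ / e` and `∏ dᵢ'` have the same prime factors. These
conditions are periodic modulo `∏ dᵢ'`, while `y` ranges over a box of side
`∏ dᵢ / e = (∏ dᵢ') · (∏ gcd(dᵢ, e²) / e)`; the choice of the exponent `⌈max vₚ(dᵢ) / 2⌉` in `ψ`
is what makes `e ∣ ∏ gcd(dᵢ, e²)`. Hence the fibre of `e` has `ρ*(d') · (∏ gcd(dᵢ, e²) / e)²`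
points. -/

lemma natCast_dvd_mul_iff_dvd_div_gcd {n : ℕ} (hn : 0 < n) (k : ℕ) (q : ℤ) :
    (n : ℤ) ∣ k * q ↔ ((n / n.gcd k : ℕ) : ℤ) ∣ q := by
  have hcast : ((n / n.gcd k : ℕ) : ℤ) = n / Int.gcd n k := by
    rw [Int.gcd_natCast_natCast, Int.natCast_div]
  constructor
  · intro h
    rw [hcast, ← Int.modEq_zero_iff_dvd]
    exact Int.ModEq.cancel_left_div_gcd (by exact_mod_cast hn)
      (by simpa [Int.modEq_zero_iff_dvd] using h)
  · intro h
    have := mul_dvd_mul h (Int.natCast_dvd_natCast.mpr (Nat.gcd_dvd_right n k))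
    rwa [← Nat.cast_mul, Nat.div_mul_cancel (Nat.gcd_dvd_left n k), mul_comm] at this

lemma Nat.factorization_div_gcd {n m : ℕ} (hn : n ≠ 0) (hm : m ≠ 0) :
    (n / n.gcd m).factorization = n.factorization - m.factorization := by
  ext p
  rw [Nat.factorization_div (Nat.gcd_dvd_left n m), Finsupp.tsub_apply, Finsupp.tsub_apply,
    Nat.factorization_gcd hn hm, Finsupp.inf_apply]
  omega

lemma Nat.Coprime.of_primeFactors_subset {m A B : ℕ} (hB : B ≠ 0)
    (hBA : B.primeFactors ⊆ A.primeFactors) (h : m.Coprime A) : m.Coprime B :=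
  Nat.coprime_of_dvd fun _ hp hpm hpB =>
    (hp.coprime_iff_not_dvd.mp (h.coprime_dvd_left hpm))
      (Nat.dvd_of_mem_primeFactors (hBA (Nat.mem_primeFactors.mpr ⟨hp, hpB, hB⟩)))

lemma card_filter_range_mul_left {e M : ℕ} (he : 0 < e) {P : ℕ × ℕ → Prop} [DecidablePred P]
    (hP : ∀ x, P x → e ∣ x.1 ∧ e ∣ x.2) :
    #{x ∈ range (e * M) ×ˢ range (e * M) | P x}
      = #{y ∈ range M ×ˢ range M | P (e * y.1, e * y.2)} := by
  symm
  apply card_nbij' (fun y => (e * y.1, e * y.2)) (fun x => (x.1 / e, x.2 / e))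
  · rintro ⟨y₁, y₂⟩ hy
    simp only [mem_coe, mem_filter, mem_product, mem_range] at hy ⊢
    exact ⟨⟨Nat.mul_lt_mul_of_pos_left hy.1.1 he, Nat.mul_lt_mul_of_pos_left hy.1.2 he⟩, hy.2⟩
  · rintro ⟨x₁, x₂⟩ hx
    simp only [mem_coe, mem_filter, mem_product, mem_range] at hx ⊢
    obtain ⟨⟨k₁, rfl⟩, ⟨k₂, rfl⟩⟩ := hP _ hx.2
    simp only [Nat.mul_div_cancel_left _ he]
    exact ⟨⟨Nat.lt_of_mul_lt_mul_left hx.1.1, Nat.lt_of_mul_lt_mul_left hx.1.2⟩, hx.2⟩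
  · intro y _
    simp [Nat.mul_div_cancel_left _ he]
  · rintro ⟨x₁, x₂⟩ hx
    obtain ⟨⟨k₁, rfl⟩, ⟨k₂, rfl⟩⟩ := hP _ (mem_filter.mp hx).2
    simp [Nat.mul_div_cancel_left _ he]

lemma card_filter_range_mul_of_periodic {N : ℕ} (k : ℕ) (hN : 0 < N) {P : ℕ × ℕ → Prop}
    [DecidablePred P] (hP : ∀ x, P (x.1 % N, x.2 % N) ↔ P x) :
    #{x ∈ range (N * k) ×ˢ range (N * k) | P x} = k ^ 2 * #{x ∈ range N ×ˢ range N | P x} := by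
  have hlt : ∀ {r u}, r < N → u < k → r + N * u < N * k := fun hr hu => by nlinarith
  have hsplit : #{x ∈ range (N * k) ×ˢ range (N * k) | P x}
      = #({x ∈ range N ×ˢ range N | P x} ×ˢ (range k ×ˢ range k)) := by
    apply card_nbij' (fun x => ((x.1 % N, x.2 % N), (x.1 / N, x.2 / N)))
      (fun z => (z.1.1 + N * z.2.1, z.1.2 + N * z.2.2))
    · rintro ⟨x₁, x₂⟩ hx
      simp only [mem_coe, mem_filter, mem_product, mem_range] at hx ⊢
      exact ⟨⟨⟨Nat.mod_lt _ hN, Nat.mod_lt _ hN⟩, (hP _).mpr hx.2⟩,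
        Nat.div_lt_of_lt_mul hx.1.1, Nat.div_lt_of_lt_mul hx.1.2⟩
    · rintro ⟨⟨r₁, r₂⟩, u₁, u₂⟩ hz
      simp only [mem_coe, mem_filter, mem_product, mem_range] at hz ⊢
      refine ⟨⟨hlt hz.1.1.1 hz.2.1, hlt hz.1.1.2 hz.2.2⟩, (hP _).mp ?_⟩
      simpa [Nat.mod_eq_of_lt hz.1.1.1, Nat.mod_eq_of_lt hz.1.1.2] using hz.1.2
    · intro x _
      simp [Nat.mod_add_div]
    · rintro ⟨⟨r₁, r₂⟩, u₁, u₂⟩ hz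
      simp only [mem_coe, mem_filter, mem_product, mem_range] at hz
      simp [Nat.mod_eq_of_lt hz.1.1.1, Nat.mod_eq_of_lt hz.1.1.2, Nat.add_mul_div_left _ _ hN,
        Nat.div_eq_of_lt hz.1.1.1, Nat.div_eq_of_lt hz.1.1.2]
  rw [hsplit, card_product, card_product, card_range]
  ring

section QuadraticForms

variable {g : ℕ} (a b c : Fin g → ℤ) (i : Fin g)

lemma qf_mul (e x₁ x₂ : ℤ) : qf a b c i (e * x₁, e * x₂) = e ^ 2 * qf a b c i (x₁, x₂) := by
  simp only [qf]
  ring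

lemma qf_modEq {n x₁ x₂ y₁ y₂ : ℤ} (h₁ : x₁ ≡ y₁ [ZMOD n]) (h₂ : x₂ ≡ y₂ [ZMOD n]) :
    qf a b c i (x₁, x₂) ≡ qf a b c i (y₁, y₂) [ZMOD n] := by
  simp only [qf]
  gcongr

lemma natCast_dvd_qf_mul_iff {n : ℕ} (hn : 0 < n) (e x₁ x₂ : ℕ) :
    (n : ℤ) ∣ qf a b c i (((e * x₁ : ℕ) : ℤ), ((e * x₂ : ℕ) : ℤ))
      ↔ ((n / n.gcd (e ^ 2) : ℕ) : ℤ) ∣ qf a b c i (x₁, x₂) := by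
  rw [← natCast_dvd_mul_iff_dvd_div_gcd hn, Nat.cast_mul, Nat.cast_mul, qf_mul, Nat.cast_pow]

lemma natCast_dvd_qf_mod_iff {n N : ℕ} (hn : n ∣ N) (x₁ x₂ : ℕ) :
    (n : ℤ) ∣ qf a b c i (((x₁ % N : ℕ) : ℤ), ((x₂ % N : ℕ) : ℤ))
      ↔ (n : ℤ) ∣ qf a b c i (x₁, x₂) := by
  have hmod : ∀ x : ℕ, ((x % N : ℕ) : ℤ) ≡ x [ZMOD n] := fun x =>
    Int.natCast_modEq_iff.mpr ((Nat.mod_modEq x N).of_dvd hn)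
  rw [← Int.modEq_zero_iff_dvd, ← Int.modEq_zero_iff_dvd]
  exact ⟨(qf_modEq a b c i (hmod x₁) (hmod x₂)).symm.trans,
    (qf_modEq a b c i (hmod x₁) (hmod x₂)).trans⟩

end QuadraticForms

lemma gcd_gcd_mod (N x₁ x₂ : ℕ) : ((x₁ % N).gcd (x₂ % N)).gcd N = (x₁.gcd x₂).gcd N := by
  rw [Nat.gcd_assoc, Nat.gcd_assoc, (Nat.mod_modEq x₂ N).gcd_eq,
    ((Nat.mod_modEq x₁ N).of_dvd (Nat.gcd_dvd_right x₂ N)).gcd_eq]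

lemma gcd_gcd_mul_eq_self_iff {e n : ℕ} (he : e ≠ 0) (hn : e ∣ n) (x₁ x₂ : ℕ) :
    ((e * x₁).gcd (e * x₂)).gcd n = e ↔ (x₁.gcd x₂).Coprime (n / e) := by
  obtain ⟨k, rfl⟩ := hn
  rw [Nat.gcd_mul_left, Nat.gcd_mul_left, mul_eq_left₀ he, Nat.mul_div_cancel_left _ (by omega)]

section Psi

variable {g : ℕ} {d : Fin g → ℕ} {e : ℕ}

lemma psi_ne_zero : psi g d ≠ 0 :=
  prod_ne_zero_iff.mpr fun _ hp => pow_ne_zero _ (Nat.prime_of_mem_primeFactors hp).ne_zero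

lemma factorization_psi (hd : ∀ i, 0 < d i) (p : ℕ) :
    (psi g d).factorization p = ((univ.sup fun i => (d i).factorization p) + 1) / 2 := by
  rw [psi, Nat.factorization_prod fun q hq =>
      pow_ne_zero _ (Nat.prime_of_mem_primeFactors hq).ne_zero, Finset.sum_apply',
    sum_congr rfl fun q hq => by
      rw [(Nat.prime_of_mem_primeFactors hq).factorization_pow, Finsupp.single_apply],
    sum_ite_eq']
  split_ifs with hp
  · rfl
  · have hsum : ∑ i, (d i).factorization p = 0 := by
      rw [← Finset.sum_apply', ← Nat.factorization_prod fun i _ => (hd i).ne']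
      rwa [← Finsupp.notMem_support_iff, Nat.support_factorization]
    rw [(Finset.sup_eq_bot_iff _ _).mpr fun i _ => sum_eq_zero_iff.mp hsum i (mem_univ i)]
    rfl

lemma factorization_le_of_dvd_psi (hd : ∀ i, 0 < d i) (he : e ∣ psi g d) (p : ℕ) :
    e.factorization p ≤ ((univ.sup fun i => (d i).factorization p) + 1) / 2 :=
  factorization_psi hd p ▸ (Nat.factorization_le_iff_dvd (ne_zero_of_dvd_ne_zero psi_ne_zero he)
    psi_ne_zero).mpr he p

lemma dvd_prod_gcd_sq_of_dvd_psi (hd : ∀ i, 0 < d i) (he : e ∣ psi g d) :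
    e ∣ ∏ i, (d i).gcd (e ^ 2) := by
  have he0 : e ≠ 0 := ne_zero_of_dvd_ne_zero psi_ne_zero he
  rw [← Nat.factorization_le_iff_dvd he0
    (prod_ne_zero_iff.mpr fun i _ => (Nat.gcd_pos_of_pos_left _ (hd i)).ne')]
  intro p
  simp only [Nat.factorization_prod fun i _ => (Nat.gcd_pos_of_pos_left _ (hd i)).ne',
    Finset.sum_apply', Nat.factorization_gcd (hd _).ne' (pow_ne_zero 2 he0), Finsupp.inf_apply,
    Nat.factorization_pow, Finsupp.smul_apply, smul_eq_mul]
  have hle := factorization_le_of_dvd_psi hd he p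
  rcases Nat.eq_zero_or_pos (e.factorization p) with h0 | hpos
  · omega
  -- a maximal `v_p(d_i)` is at least `2 v_p(e) - 1 ≥ v_p(e)`
  obtain ⟨i, -, hi⟩ := Finset.lt_sup_iff.mp
    (show 2 * e.factorization p - 2 < univ.sup fun i => (d i).factorization p by omega)
  calc e.factorization p ≤ (d i).factorization p ⊓ 2 * e.factorization p :=
        le_inf (by omega) (by omega)
    _ ≤ _ := single_le_sum (f := fun i => (d i).factorization p ⊓ 2 * e.factorization p)
        (fun _ _ => Nat.zero_le _) (mem_univ i)

lemma primeFactors_psi_div (hd : ∀ i, 0 < d i) (he : e ∣ psi g d) :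
    (psi g d / e).primeFactors = (∏ i, d i / (d i).gcd (e ^ 2)).primeFactors := by
  have he0 : e ≠ 0 := ne_zero_of_dvd_ne_zero psi_ne_zero he
  ext p
  have hle := factorization_le_of_dvd_psi hd he p
  simp only [← Nat.support_factorization, Finsupp.mem_support_iff, Nat.factorization_div he,
    Finsupp.tsub_apply, factorization_psi hd,
    Nat.factorization_prod fun i _ => (Nat.div_gcd_pos_of_pos_left _ (hd i)).ne',
    Finset.sum_apply', Nat.factorization_div_gcd (hd _).ne' (pow_ne_zero 2 he0),
    Nat.factorization_pow, Finsupp.smul_apply, smul_eq_mul, Ne, sum_eq_zero_iff, mem_univ,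
    true_implies, not_forall]
  have hsup := Finset.lt_sup_iff (s := univ) (f := fun i => (d i).factorization p)
    (a := 2 * e.factorization p)
  simp only [mem_univ, true_and] at hsup
  constructor
  · intro h
    obtain ⟨i, hi⟩ := hsup.mp (by omega)
    exact ⟨i, by omega⟩
  · rintro ⟨i, hi⟩
    have := hsup.mpr ⟨i, by omega⟩
    omega

end Psi

lemma card_filter_gcd_eq_of_mem_divisors_psi {g : ℕ} (a b c : Fin g → ℤ) {d : Fin g → ℕ} {e : ℕ}
    (hd : ∀ i, 0 < d i) (he : e ∈ (psi g d).divisors) :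
    #{x ∈ range (∏ i, d i) ×ˢ range (∏ i, d i) |
        (∀ i, (d i : ℤ) ∣ qf a b c i (x.1, x.2)) ∧ (x.1.gcd x.2).gcd (psi g d) = e}
      = rhostar g a b c (fun i => d i / (d i).gcd (e ^ 2))
          * ((∏ i, (d i).gcd (e ^ 2)) ^ 2 / e ^ 2) := by
  have heψ := Nat.dvd_of_mem_divisors he
  have he0 := Nat.pos_of_mem_divisors he
  set D' := ∏ i, d i / (d i).gcd (e ^ 2)
  have hD' : 0 < D' := prod_pos fun i _ => Nat.div_gcd_pos_of_pos_left _ (hd i)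
  obtain ⟨k, hk⟩ := dvd_prod_gcd_sq_of_dvd_psi hd heψ
  have hD : ∏ i, d i = e * (D' * k) := by
    rw [mul_left_comm, ← hk, ← prod_mul_distrib]
    exact prod_congr rfl fun i _ => (Nat.div_mul_cancel (Nat.gcd_dvd_left _ _)).symm
  have hψe : psi g d / e ≠ 0 :=
    (Nat.div_pos (Nat.le_of_dvd (Nat.pos_of_ne_zero psi_ne_zero) heψ) he0).ne'
  have hcop : ∀ m : ℕ, m.Coprime (psi g d / e) ↔ m.Coprime D' := fun _ =>
    ⟨Nat.Coprime.of_primeFactors_subset hD'.ne' (primeFactors_psi_div hd heψ).ge,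
      Nat.Coprime.of_primeFactors_subset hψe (primeFactors_psi_div hd heψ).le⟩
  have hdvd : ∀ x : ℕ × ℕ, (x.1.gcd x.2).gcd (psi g d) = e → e ∣ x.1 ∧ e ∣ x.2 := fun x hx =>
    ⟨hx ▸ (Nat.gcd_dvd_left _ _).trans (Nat.gcd_dvd_left _ _),
      hx ▸ (Nat.gcd_dvd_left _ _).trans (Nat.gcd_dvd_right _ _)⟩
  rw [hD, card_filter_range_mul_left he0 fun x hx => hdvd x hx.2,
    filter_congr fun y _ => and_congr
      (forall_congr' fun i => natCast_dvd_qf_mul_iff a b c i (hd i) e y.1 y.2)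
      ((gcd_gcd_mul_eq_self_iff he0.ne' heψ y.1 y.2).trans (hcop _)),
    card_filter_range_mul_of_periodic k hD' fun y => and_congr
      (forall_congr' fun i => natCast_dvd_qf_mod_iff a b c i (dvd_prod_of_mem _ (mem_univ i)) _ _)
      (by rw [Nat.Coprime, Nat.Coprime, gcd_gcd_mod]),
    hk, mul_pow, Nat.mul_div_cancel_left _ (by positivity), mul_comm]
  rfl

theorem stmt1_general (g : ℕ) (a b c : Fin g → ℤ)
    (d : Fin g → ℕ) (hd : ∀ i, 0 < d i) :
    rho g a b c d =
      ∑ e ∈ (psi g d).divisors,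
        rhostar g a b c (fun i => d i / Nat.gcd (d i) (e ^ 2)) *
          ((∏ i, Nat.gcd (d i) (e ^ 2)) ^ 2 / e ^ 2) := by
  rw [rho, card_eq_sum_card_fiberwise (f := fun x => (x.1.gcd x.2).gcd (psi g d))
    fun x _ => Nat.mem_divisors.mpr ⟨Nat.gcd_dvd_right _ _, psi_ne_zero⟩]
  refine sum_congr rfl fun e he => ?_
  rw [filter_filter]
  exact card_filter_gcd_eq_of_mem_divisors_psi a b c hd he

/-- the transition formula expressing `ρ` in terms of `ρ*`. -/
theorem stmt1 (g : ℕ) (hg : 2 ≤ g) (a b c : Fin g → ℤ)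
    (d : Fin g → ℕ) (hd : ∀ i, 0 < d i) :
    rho g a b c d =
      ∑ e ∈ (psi g d).divisors,
        rhostar g a b c (fun i => d i / Nat.gcd (d i) (e ^ 2)) *
          ((∏ i, Nat.gcd (d i) (e ^ 2)) ^ 2 / e ^ 2) :=
  stmt1_general g a b c d hd
end

section
/- Let q₁ and q₂ be integer binary quadratic forms as in the context, let p be a prime and e₁, e₂ ≥ 0 integers. If there exists x = (x₁,x₂) ∈ ℤ² with gcd(x₁, x₂, p) = 1 such that p^{e₁} ∣ q₁(x) and p^{e₂} ∣ q₂(x), then p^{min(e₁,e₂)} divides Res(q₁,q₂). -/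
def binQuadForm (a b c x y : ℤ) : ℤ :=
  a * x ^ 2 + 2 * b * x * y + c * y ^ 2

theorem binQuadForm_swap (a b c x y : ℤ) : binQuadForm c b a y x = binQuadForm a b c x y := by
  unfold binQuadForm
  ring

theorem res₂_swap (a₁ b₁ c₁ a₂ b₂ c₂ : ℤ) :
    res₂ c₁ b₁ a₁ c₂ b₂ a₂ = res₂ a₁ b₁ c₁ a₂ b₂ c₂ := by
  unfold res₂
  ring

theorem res₂_mul_pow_three_eq (a₁ b₁ c₁ a₂ b₂ c₂ x y : ℤ) :
    res₂ a₁ b₁ c₁ a₂ b₂ c₂ * x ^ 3 =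
      (-2 * (b₁ * c₂ - b₂ * c₁) * c₂ * y
          + (-4 * (b₁ * c₂ - b₂ * c₁) * b₂ + (a₁ * c₂ - a₂ * c₁) * c₂) * x) *
        binQuadForm a₁ b₁ c₁ x y +
      (2 * (b₁ * c₂ - b₂ * c₁) * c₁ * y
          + (4 * (b₁ * c₂ - b₂ * c₁) * b₁ - (a₁ * c₂ - a₂ * c₁) * c₁) * x) *
        binQuadForm a₂ b₂ c₂ x y := by
  unfold res₂ binQuadForm
  ring

theorem dvd_res₂_mul_pow_three {d a₁ b₁ c₁ a₂ b₂ c₂ x y : ℤ}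
    (h₁ : d ∣ binQuadForm a₁ b₁ c₁ x y) (h₂ : d ∣ binQuadForm a₂ b₂ c₂ x y) :
    d ∣ res₂ a₁ b₁ c₁ a₂ b₂ c₂ * x ^ 3 := by
  rw [res₂_mul_pow_three_eq]
  exact dvd_add (h₁.mul_left _) (h₂.mul_left _)

section

variable {p a₁ b₁ c₁ a₂ b₂ c₂ x y : ℤ} {e : ℕ}

theorem pow_dvd_res₂_of_not_dvd_left (hp : Prime p) (hx : ¬p ∣ x)
    (h₁ : p ^ e ∣ binQuadForm a₁ b₁ c₁ x y) (h₂ : p ^ e ∣ binQuadForm a₂ b₂ c₂ x y) :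
    p ^ e ∣ res₂ a₁ b₁ c₁ a₂ b₂ c₂ :=
  hp.pow_dvd_of_dvd_mul_right e (fun h ↦ hx (hp.dvd_of_dvd_pow h)) (dvd_res₂_mul_pow_three h₁ h₂)

theorem pow_dvd_res₂_of_not_dvd_right (hp : Prime p) (hy : ¬p ∣ y)
    (h₁ : p ^ e ∣ binQuadForm a₁ b₁ c₁ x y) (h₂ : p ^ e ∣ binQuadForm a₂ b₂ c₂ x y) :
    p ^ e ∣ res₂ a₁ b₁ c₁ a₂ b₂ c₂ := by
  rw [← binQuadForm_swap] at h₁ h₂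
  rw [← res₂_swap]
  exact pow_dvd_res₂_of_not_dvd_left hp hy h₁ h₂

end

theorem Int.not_dvd_or_not_dvd_of_gcd_gcd_eq_one {p : ℕ} (hp : p ≠ 1) {x y : ℤ}
    (h : Nat.gcd (Int.gcd x y) p = 1) : ¬(p : ℤ) ∣ x ∨ ¬(p : ℤ) ∣ y := by
  by_contra! ⟨hx, hy⟩
  have hpg : p ∣ Int.gcd x y := Int.natCast_dvd_natCast.mp (Int.dvd_coe_gcd hx hy)
  exact hp (Nat.Coprime.eq_one_of_dvd (Nat.Coprime.symm h) hpg)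

/-- a common primitive zero of `q₁ mod p^{e₁}` and `q₂ mod p^{e₂}` forces
`p^{min(e₁,e₂)}` to divide the resolvent. -/
theorem stmt3 (a₁ b₁ c₁ a₂ b₂ c₂ : ℤ) (p : ℕ) (hp : p.Prime) (e₁ e₂ : ℕ)
    (hx : ∃ x : ℤ × ℤ, Nat.gcd (Int.gcd x.1 x.2) p = 1 ∧
      (p : ℤ) ^ e₁ ∣ (a₁ * x.1 ^ 2 + 2 * b₁ * x.1 * x.2 + c₁ * x.2 ^ 2) ∧
      (p : ℤ) ^ e₂ ∣ (a₂ * x.1 ^ 2 + 2 * b₂ * x.1 * x.2 + c₂ * x.2 ^ 2)) :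
    (p : ℤ) ^ min e₁ e₂ ∣ res₂ a₁ b₁ c₁ a₂ b₂ c₂ := by
  obtain ⟨⟨x, y⟩, hxy, h₁, h₂⟩ := hx
  have hpZ : Prime (p : ℤ) := Nat.prime_iff_prime_int.mp hp
  have h₁' : (p : ℤ) ^ min e₁ e₂ ∣ binQuadForm a₁ b₁ c₁ x y :=
    (pow_dvd_pow _ (min_le_left e₁ e₂)).trans h₁
  have h₂' : (p : ℤ) ^ min e₁ e₂ ∣ binQuadForm a₂ b₂ c₂ x y :=
    (pow_dvd_pow _ (min_le_right e₁ e₂)).trans h₂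
  rcases Int.not_dvd_or_not_dvd_of_gcd_gcd_eq_one hp.one_lt.ne' hxy with hx | hy
  · exact pow_dvd_res₂_of_not_dvd_left hpZ hx h₁' h₂'
  · exact pow_dvd_res₂_of_not_dvd_right hpZ hy h₁' h₂'
end

section
/- Let p be a prime with p ∤ D, and let e₁,…,e_g ≥ 0 be integers such that e_i > 0 and e_j > 0 for some pair i ≠ j. Then ρ*(p^{e₁},…,p^{e_g}) = 0. -/
open Finset

lemma res_identity (a1 b1 c1 a2 b2 c2 x y : ℤ) :
    res₂ a1 b1 c1 a2 b2 c2 * x * y ^ 2 =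
      (2*(b1*a2 - b2*a1)*c2*y - (a1*c2 - a2*c1)*a2*x) *
        (a1*x^2 + 2*b1*x*y + c1*y^2)
      + ((a1*c2 - a2*c1)*a1*x - 2*(b1*a2 - b2*a1)*c1*y) *
        (a2*x^2 + 2*b2*x*y + c2*y^2) := by
  unfold res₂; ring

/-- helper: from p ∣ q_i(x), p ∣ q_j(x), p prime not dividing the resolvent nor a,c
coefficients, conclude p divides both coordinates. -/
lemma helper {a1 b1 c1 a2 b2 c2 x y : ℤ} {p : ℕ} (hp : p.Prime)
    (hres : ¬ (p : ℤ) ∣ res₂ a1 b1 c1 a2 b2 c2)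
    (ha1 : ¬ (p : ℤ) ∣ a1) (hc1 : ¬ (p : ℤ) ∣ c1)
    (hq1 : (p : ℤ) ∣ a1*x^2 + 2*b1*x*y + c1*y^2)
    (hq2 : (p : ℤ) ∣ a2*x^2 + 2*b2*x*y + c2*y^2) :
    (p : ℤ) ∣ x ∧ (p : ℤ) ∣ y := by
  have hpZ : Prime (p : ℤ) := Nat.prime_iff_prime_int.mp hp
  have hxy : (p : ℤ) ∣ x * y ^ 2 := by
    have h : (p : ℤ) ∣ res₂ a1 b1 c1 a2 b2 c2 * x * y ^ 2 := by
      rw [res_identity]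
      exact dvd_add (Dvd.dvd.mul_left hq1 _) (Dvd.dvd.mul_left hq2 _)
    rw [mul_assoc] at h
    rcases hpZ.dvd_mul.mp h with h' | h'
    · exact absurd h' hres
    · exact h'
  rcases hpZ.dvd_mul.mp hxy with hx | hy
  · refine ⟨hx, ?_⟩
    have : (p : ℤ) ∣ c1 * y ^ 2 := by
      have : (p : ℤ) ∣ (a1*x^2 + 2*b1*x*y + c1*y^2) - x * (a1*x + 2*b1*y) := by
        exact dvd_sub hq1 (hx.mul_right _)
      simpa [mul_comm, mul_add, mul_assoc] using (by ring_nf at this ⊢; exact this : (p:ℤ) ∣ c1 * y^2)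
    rcases hpZ.dvd_mul.mp this with h' | h'
    · exact absurd h' hc1
    · exact hpZ.dvd_of_dvd_pow h'
  · have hy' : (p:ℤ) ∣ y := hpZ.dvd_of_dvd_pow hy
    refine ⟨?_, hy'⟩
    have : (p : ℤ) ∣ a1 * x ^ 2 := by
      have h2 : (p : ℤ) ∣ (a1*x^2 + 2*b1*x*y + c1*y^2) - y * (2*b1*x + c1*y) := by
        exact dvd_sub hq1 (hy'.mul_right _)
      have : (a1*x^2 + 2*b1*x*y + c1*y^2) - y * (2*b1*x + c1*y) = a1 * x ^ 2 := by ring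
      rwa [this] at h2
    rcases hpZ.dvd_mul.mp this with h' | h'
    · exact absurd h' ha1
    · exact hpZ.dvd_of_dvd_pow h'

/-- for `p ∤ D`, the quantity `ρ*(p^{e₁},…,p^{e_g})` vanishes
as soon as two exponents are positive. -/
theorem stmt4 (g : ℕ) (hg : 2 ≤ g) (a b c : Fin g → ℤ)
    (hirr : ∀ i, ¬ IsSquare (b i ^ 2 - a i * c i))
    (p : ℕ) (hp : p.Prime) (hpD : ¬ ((p : ℤ) ∣ Dconst g a b c))
    (e : Fin g → ℕ) (i j : Fin g) (hij : i ≠ j) (hi : 0 < e i) (hj : 0 < e j) :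
    rhostar g a b c (fun k => p ^ e k) = 0 := by
  rw [rhostar, Finset.card_eq_zero, Finset.filter_eq_empty_iff]
  rintro x hx ⟨hdvd, hgcd⟩
  -- p does not divide any a k, c k
  have hMid : (∏ k, a k * c k * (b k ^ 2 - a k * c k)) ∣ Dconst g a b c := by
    unfold Dconst
    exact (dvd_mul_left _ _).trans (dvd_mul_right _ _)
  have hac : ∀ k : Fin g, ¬ (p : ℤ) ∣ a k ∧ ¬ (p : ℤ) ∣ c k := by
    intro k
    have hk : a k * c k * (b k ^ 2 - a k * c k) ∣ Dconst g a b c :=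
      (Finset.dvd_prod_of_mem _ (Finset.mem_univ k)).trans hMid
    constructor
    · exact fun h => hpD (h.trans ((dvd_mul_of_dvd_left (dvd_mul_right _ _) _).trans hk))
    · exact fun h => hpD (h.trans ((dvd_mul_of_dvd_left (dvd_mul_left _ _) _).trans hk))
  have hres : ∀ u v : Fin g, u < v →
      ¬ (p : ℤ) ∣ res₂ (a u) (b u) (c u) (a v) (b v) (c v) := by
    intro u v huv h
    apply hpD
    have h1 : res₂ (a u) (b u) (c u) (a v) (b v) (c v) ∣
        ∏ i, ∏ j ∈ Finset.Ioi i, res₂ (a i) (b i) (c i) (a j) (b j) (c j) :=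
      (Finset.dvd_prod_of_mem
          (fun j => res₂ (a u) (b u) (c u) (a j) (b j) (c j))
          (Finset.mem_Ioi.mpr huv)).trans
        (Finset.dvd_prod_of_mem
          (fun i => ∏ j ∈ Finset.Ioi i, res₂ (a i) (b i) (c i) (a j) (b j) (c j))
          (Finset.mem_univ u))
    have h2 : (∏ i, ∏ j ∈ Finset.Ioi i, res₂ (a i) (b i) (c i) (a j) (b j) (c j)) ∣
        Dconst g a b c := dvd_mul_left _ _
    exact h.trans (h1.trans h2)
  -- p divides q_k(x) for k with e k > 0
  have hq : ∀ k : Fin g, 0 < e k →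
      (p : ℤ) ∣ a k * (x.1:ℤ)^2 + 2 * b k * (x.1:ℤ) * (x.2:ℤ) + c k * (x.2:ℤ)^2 := by
    intro k hk
    have h1 : (p : ℤ) ∣ ((p ^ e k : ℕ) : ℤ) := by
      push_cast
      exact dvd_pow_self _ hk.ne'
    have h2 : ((p ^ e k : ℕ) : ℤ) ∣
        a k * (x.1:ℤ)^2 + 2 * b k * (x.1:ℤ) * (x.2:ℤ) + c k * (x.2:ℤ)^2 := by
      simpa [qf] using hdvd k
    exact h1.trans h2
  -- conclude p ∣ x.1 and p ∣ x.2
  have hx12 : (p : ℤ) ∣ (x.1 : ℤ) ∧ (p : ℤ) ∣ (x.2 : ℤ) := by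
    rcases hij.lt_or_gt with h | h
    · exact helper hp (hres i j h) (hac i).1 (hac i).2 (hq i hi) (hq j hj)
    · exact helper hp (hres j i h) (hac j).1 (hac j).2 (hq j hj) (hq i hi)
  have hpx1 : p ∣ x.1 := Int.natCast_dvd_natCast.mp hx12.1
  have hpx2 : p ∣ x.2 := Int.natCast_dvd_natCast.mp hx12.2
  have hpN : p ∣ ∏ k, p ^ e k :=
    (dvd_pow_self p hi.ne').trans (Finset.dvd_prod_of_mem _ (Finset.mem_univ i))
  have : p ∣ 1 := hgcd ▸ Nat.dvd_gcd (Nat.dvd_gcd hpx1 hpx2) hpN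
  exact hp.ne_one (Nat.eq_one_of_dvd_one this)
end

section
/- Assume D ≠ 0. There exists a constant C > 0, depending only on the forms q₁,…,q_g, such that for every prime p and all integers e₁,…,e_g ≥ 0 one has ρ*(p^{e₁},…,p^{e_g}) ≤ C · p^{max(e₁,…,e_g)}. -/
open Finset

/-!
Let `M = e_m` be the largest exponent and `S = ∑ eᵢ`. Up to the factors `y³` and `x³`, the
resultant of two forms is a combination of them, so a common zero `x` of the `qᵢ` modulo `p^{eᵢ}`
that is primitive at `p` forces `p^{eᵢ} ∣ Res(qᵢ, q_m)` for `i ≠ m`; hence `p^{S-M}` is bounded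
by a product of resultants. It remains to count primitive zeros of `q_m` modulo `p^M` in
`[0, p^S)²`. Fixing the coordinate prime to `p`, the other one is a root of a quadratic of
discriminant `4δ_m y²`, and the roots modulo `p^M` of such a quadratic lie in two residue classes
modulo `p^{M - v_p(16δ_m) - v_p(2a_m)}`. This gives `O(p^M · p^{2(S-M)}) = O(p^M)` points.
-/

theorem Prime.pow_dvd_of_pow_add_dvd_mul_left {M : Type*} [CommMonoidWithZero M] [IsCancelMulZero M]
    {p x y : M} (hp : Prime p) {j n : ℕ} (hx : ¬p ^ (j + 1) ∣ x) (h : p ^ (n + j) ∣ x * y) :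
    p ^ n ∣ y := by
  induction j generalizing x with
  | zero => exact hp.pow_dvd_of_dvd_mul_left n (by simpa using hx) h
  | succ j ih =>
    by_cases hpx : p ∣ x
    · obtain ⟨x, rfl⟩ := hpx
      refine ih (x := x) ?_ ?_
      · rwa [pow_succ' _ (j + 1), mul_dvd_mul_iff_left hp.ne_zero] at hx
      · rwa [← add_assoc, pow_succ', mul_assoc, mul_dvd_mul_iff_left hp.ne_zero] at h
    · exact (pow_dvd_pow p (by omega)).trans (hp.pow_dvd_of_dvd_mul_left _ hpx h)

theorem Prime.pow_dvd_sub_or_pow_dvd_add {R : Type*} [CommRing R] [IsDomain R] {p u v Δ : R}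
    (hp : Prime p) {k n : ℕ} (hΔ : ¬p ^ (k + 1) ∣ 4 * Δ) (hu : p ^ (n + k) ∣ u ^ 2 - Δ)
    (hv : p ^ (n + k) ∣ v ^ 2 - Δ) : p ^ n ∣ u - v ∨ p ^ n ∣ u + v := by
  rcases Nat.eq_zero_or_pos n with rfl | hn
  · simp
  have huv : p ^ (n + k) ∣ (u - v) * (u + v) :=
    (dvd_sub hu hv).trans (Eq.dvd (by ring))
  by_cases hsub : p ^ (k + 1) ∣ u - v
  · by_cases hadd : p ^ (k + 1) ∣ u + v
    · refine absurd ?_ hΔ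
      have h2u : p ^ (k + 1) ∣ 2 * u := (dvd_add hsub hadd).trans (Eq.dvd (by ring))
      have hu' : p ^ (k + 1) ∣ u ^ 2 - Δ := (pow_dvd_pow p (by omega)).trans hu
      have : 4 * Δ = (2 * u) ^ 2 - 4 * (u ^ 2 - Δ) := by ring
      rw [this]
      exact dvd_sub (dvd_pow h2u two_ne_zero) (dvd_mul_of_dvd_right hu' 4)
    · exact Or.inl (hp.pow_dvd_of_pow_add_dvd_mul_left hadd (by rwa [mul_comm] at huv))
  · exact Or.inr (hp.pow_dvd_of_pow_add_dvd_mul_left hsub huv)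

theorem card_le_of_subset_range_mul_of_modEq {s : Finset ℕ} {q n : ℕ} (hs : s ⊆ range (q * n))
    (hmod : ∀ x ∈ s, ∀ y ∈ s, x ≡ y [MOD q]) : #s ≤ n := by
  calc #s ≤ #(range n) := by
        refine card_le_card_of_injOn (· / q) (fun x hx => ?_) fun x hx y hy hxy => ?_
        · simpa using Nat.div_lt_of_lt_mul (mem_range.1 (hs hx))
        · rw [← Nat.div_add_mod x q, ← Nat.div_add_mod y q, show x / q = y / q from hxy,
            hmod x hx y hy]
    _ = n := card_range n

theorem card_filter_pow_dvd_linear_le {p : ℕ} (hp : p.Prime) {a c : ℤ} {j L N : ℕ}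
    (ha : ¬(p : ℤ) ^ (j + 1) ∣ a) (hLN : L ≤ N) :
    #{t ∈ range (p ^ N) | (p : ℤ) ^ (L + j) ∣ a * ((t : ℕ) : ℤ) + c} ≤ p ^ (N - L) := by
  refine card_le_of_subset_range_mul_of_modEq (q := p ^ L) ?_ fun x hx y hy => ?_
  · rw [← pow_add, Nat.add_sub_cancel' hLN]
    exact filter_subset _ _
  · rw [mem_filter] at hx hy
    have hxy : (p : ℤ) ^ (L + j) ∣ a * ((y : ℤ) - x) := (dvd_sub hy.2 hx.2).trans (Eq.dvd (by ring))
    rw [Nat.modEq_iff_dvd]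
    exact_mod_cast (Nat.prime_iff_prime_int.1 hp).pow_dvd_of_pow_add_dvd_mul_left ha hxy

theorem card_filter_pow_dvd_quadratic_le {p : ℕ} (hp : p.Prime) {A B C : ℤ} {j k M N : ℕ}
    (hA : ¬(p : ℤ) ^ (j + 1) ∣ 2 * A) (hΔ : ¬(p : ℤ) ^ (k + 1) ∣ 4 * (B ^ 2 - 4 * A * C))
    (hMN : M ≤ N) :
    #{t ∈ range (p ^ N) | (p : ℤ) ^ M ∣ A * ((t : ℕ) : ℤ) ^ 2 + B * t + C} ≤
      2 * p ^ (k + j) * p ^ (N - M) := by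
  set T := {t ∈ range (p ^ N) | (p : ℤ) ^ M ∣ A * ((t : ℕ) : ℤ) ^ 2 + B * t + C}
  obtain hsmall | ⟨L, rfl⟩ : M ≤ k + j ∨ ∃ L, M = L + j + k :=
    (le_or_gt M (k + j)).imp id fun h => ⟨M - j - k, by omega⟩
  · calc #T ≤ p ^ N := (card_filter_le _ _).trans (card_range _).le
      _ ≤ p ^ (k + j) * p ^ (N - M) := by
        rw [← pow_add]; exact Nat.pow_le_pow_right hp.pos (by omega)
      _ ≤ 2 * p ^ (k + j) * p ^ (N - M) := by rw [mul_assoc]; omega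
  rcases T.eq_empty_or_nonempty with hT | ⟨t₀, ht₀⟩
  · simp [hT]
  -- completing the square: `4A(At² + Bt + C) = (2At + B)² - Δ`
  have hsq : ∀ t ∈ T, (p : ℤ) ^ (L + j + k) ∣ (2 * A * t + B) ^ 2 - (B ^ 2 - 4 * A * C) :=
    fun t ht => (dvd_mul_of_dvd_right (mem_filter.1 ht).2 (4 * A)).trans (Eq.dvd (by ring))
  have hsub : T ⊆ {t ∈ range (p ^ N) | (p : ℤ) ^ (L + j) ∣ 2 * A * ((t : ℕ) : ℤ) + -(2 * A * t₀)} ∪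
      {t ∈ range (p ^ N) | (p : ℤ) ^ (L + j) ∣ 2 * A * ((t : ℕ) : ℤ) + (2 * A * t₀ + 2 * B)} := by
    intro t ht
    have htN := (mem_filter.1 ht).1
    rcases (Nat.prime_iff_prime_int.1 hp).pow_dvd_sub_or_pow_dvd_add hΔ (hsq t ht)
      (hsq t₀ ht₀) with h | h
    · exact mem_union_left _ (mem_filter.2 ⟨htN, h.trans (Eq.dvd (by ring))⟩)
    · exact mem_union_right _ (mem_filter.2 ⟨htN, h.trans (Eq.dvd (by ring))⟩)
  calc #T ≤ p ^ (N - L) + p ^ (N - L) :=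
        (card_le_card hsub).trans <| (card_union_le _ _).trans <|
          add_le_add (card_filter_pow_dvd_linear_le hp hA (by omega))
            (card_filter_pow_dvd_linear_le hp hA (by omega))
    _ = 2 * p ^ (k + j) * p ^ (N - (L + j + k)) := by
      rw [mul_assoc, ← pow_add, two_mul]; congr 2 <;> omega

theorem exists_pow_le_natAbs_not_pow_succ_dvd {p : ℕ} (hp : p ≠ 1) {z : ℤ} (hz : z ≠ 0) :
    ∃ k, p ^ k ≤ z.natAbs ∧ ¬(p : ℤ) ^ (k + 1) ∣ z := by
  refine ⟨padicValInt p z, Nat.le_of_dvd (Int.natAbs_pos.2 hz) ?_, ?_⟩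
  · simpa [Int.natAbs_pow] using Int.natAbs_dvd_natAbs.2 (padicValInt_dvd (p := p) z)
  · simp [padicValInt_dvd_iff_of_ne_one hp, hz]

theorem card_filter_pow_dvd_form_not_dvd_snd_le {p : ℕ} (hp : p.Prime) {a b c : ℤ}
    {j k M N : ℕ} (ha : ¬(p : ℤ) ^ (j + 1) ∣ 2 * a)
    (hδ : ¬(p : ℤ) ^ (k + 1) ∣ 16 * (b ^ 2 - a * c)) (hMN : M ≤ N) :
    #{x ∈ range (p ^ N) ×ˢ range (p ^ N) |
        (p : ℤ) ^ M ∣ a * (x.1 : ℤ) ^ 2 + 2 * b * x.1 * x.2 + c * (x.2 : ℤ) ^ 2 ∧ ¬p ∣ x.2} ≤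
      2 * p ^ (k + j) * p ^ (N - M) * p ^ N := by
  refine (card_le_mul_card_image_of_maps_to (f := Prod.snd) (t := range (p ^ N))
    (fun x hx => (mem_product.1 (mem_filter.1 hx).1).2) _ fun y _ => ?_).trans_eq
      (by rw [card_range])
  by_cases hy : p ∣ y
  · refine (card_eq_zero.2 (filter_eq_empty_iff.2 fun x hx hxy => ?_)).trans_le (Nat.zero_le _)
    exact (mem_filter.1 hx).2.2 (hxy ▸ hy)
  have hΔ : ¬(p : ℤ) ^ (k + 1) ∣ 4 * ((2 * b * y) ^ 2 - 4 * a * (c * (y : ℤ) ^ 2)) := by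
    have hpy : ¬(p : ℤ) ∣ (y : ℤ) ^ 2 := fun h =>
      hy (Int.natCast_dvd_natCast.1 ((Nat.prime_iff_prime_int.1 hp).dvd_of_dvd_pow h))
    refine fun h => hδ ((Nat.prime_iff_prime_int.1 hp).pow_dvd_of_dvd_mul_right _ hpy ?_)
    exact h.trans (Eq.dvd (by ring))
  refine le_trans ?_ (card_filter_pow_dvd_quadratic_le hp ha hΔ hMN)
  refine card_le_card_of_injOn Prod.fst (fun x hx => ?_) fun x hx x' hx' h => ?_
  · obtain ⟨⟨⟨hx₁, -⟩, hdvd, -⟩, rfl⟩ := by simpa only [mem_coe, mem_filter, mem_product] using hx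
    exact mem_filter.2 ⟨hx₁, hdvd.trans (Eq.dvd (by ring))⟩
  · exact Prod.ext h ((mem_filter.1 hx).2.trans (mem_filter.1 hx').2.symm)

theorem card_filter_pow_dvd_form_primitive_le {p : ℕ} (hp : p.Prime) {a b c : ℤ} (ha : a ≠ 0)
    (hc : c ≠ 0) (hδ : b ^ 2 - a * c ≠ 0) {M N : ℕ} (hMN : M ≤ N) :
    #{x ∈ range (p ^ N) ×ˢ range (p ^ N) |
        (p : ℤ) ^ M ∣ a * (x.1 : ℤ) ^ 2 + 2 * b * x.1 * x.2 + c * (x.2 : ℤ) ^ 2 ∧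
          (¬p ∣ x.1 ∨ ¬p ∣ x.2)} ≤
      2 * (16 * (b ^ 2 - a * c)).natAbs * ((2 * a).natAbs + (2 * c).natAbs) * p ^ M *
        (p ^ (N - M)) ^ 2 := by
  obtain ⟨k, hk, hδk⟩ := exists_pow_le_natAbs_not_pow_succ_dvd hp.ne_one
    (mul_ne_zero (by norm_num) hδ : 16 * (b ^ 2 - a * c) ≠ 0)
  obtain ⟨ja, hja, haj⟩ := exists_pow_le_natAbs_not_pow_succ_dvd hp.ne_one
    (mul_ne_zero two_ne_zero ha)
  obtain ⟨jc, hjc, hcj⟩ := exists_pow_le_natAbs_not_pow_succ_dvd hp.ne_one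
    (mul_ne_zero two_ne_zero hc)
  have hswap : #{x ∈ range (p ^ N) ×ˢ range (p ^ N) |
        (p : ℤ) ^ M ∣ a * (x.1 : ℤ) ^ 2 + 2 * b * x.1 * x.2 + c * (x.2 : ℤ) ^ 2 ∧ ¬p ∣ x.1} =
      #{x ∈ range (p ^ N) ×ˢ range (p ^ N) |
        (p : ℤ) ^ M ∣ c * (x.1 : ℤ) ^ 2 + 2 * b * x.1 * x.2 + a * (x.2 : ℤ) ^ 2 ∧ ¬p ∣ x.2} := by
    refine card_nbij' Prod.swap Prod.swap (fun x hx => ?_) (fun x hx => ?_) (fun _ _ => rfl)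
      fun _ _ => rfl <;>
    · simp only [coe_filter, mem_product, Set.mem_ofPred_eq, Prod.fst_swap, Prod.snd_swap] at hx ⊢
      exact ⟨hx.1.symm, hx.2.1.trans (Eq.dvd (by ring)), hx.2.2⟩
  have hδc : ¬(p : ℤ) ^ (k + 1) ∣ 16 * (b ^ 2 - c * a) := by rwa [mul_comm c a]
  have hN : p ^ N = p ^ M * p ^ (N - M) := by rw [← pow_add, Nat.add_sub_cancel' hMN]
  simp_rw [and_or_left, filter_or]
  calc _ ≤ _ := card_union_le _ _
    _ ≤ 2 * p ^ (k + jc) * p ^ (N - M) * p ^ N + 2 * p ^ (k + ja) * p ^ (N - M) * p ^ N :=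
      add_le_add (hswap ▸ card_filter_pow_dvd_form_not_dvd_snd_le hp hcj hδc hMN)
        (card_filter_pow_dvd_form_not_dvd_snd_le hp haj hδk hMN)
    _ = 2 * p ^ k * (p ^ ja + p ^ jc) * p ^ M * (p ^ (N - M)) ^ 2 := by
      rw [hN, pow_add, pow_add]; ring
    _ ≤ _ := by gcongr

theorem res₂_comm (a₁ b₁ c₁ a₂ b₂ c₂ : ℤ) : res₂ a₂ b₂ c₂ a₁ b₁ c₁ = res₂ a₁ b₁ c₁ a₂ b₂ c₂ := by
  unfold res₂; ring

theorem dvd_mul_res₂_of_dvd {d a₁ b₁ c₁ a₂ b₂ c₂ x y : ℤ}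
    (h₁ : d ∣ a₁ * x ^ 2 + 2 * b₁ * x * y + c₁ * y ^ 2)
    (h₂ : d ∣ a₂ * x ^ 2 + 2 * b₂ * x * y + c₂ * y ^ 2) :
    d ∣ y ^ 3 * res₂ a₁ b₁ c₁ a₂ b₂ c₂ :=
  -- a homogenised Bezout identity for the resultant of `q₁(t,1)` and `q₂(t,1)`
  (dvd_add (h₁.mul_left (2 * a₂ * (a₁ * b₂ - a₂ * b₁) * x +
      (a₁ * (4 * b₂ * b₂ - a₂ * c₂) - 4 * a₂ * b₁ * b₂ + a₂ * a₂ * c₁) * y))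
    (h₂.mul_left (-(2 * a₁ * (a₁ * b₂ - a₂ * b₁)) * x +
      (a₁ * (a₁ * c₂ - 4 * b₁ * b₂) + 4 * a₂ * b₁ * b₁ - a₁ * a₂ * c₁) * y))).trans
    (Eq.dvd (by unfold res₂; ring))

theorem pow_dvd_res₂_of_pow_dvd {p a₁ b₁ c₁ a₂ b₂ c₂ x y : ℤ} (hp : Prime p)
    (hxy : ¬p ∣ x ∨ ¬p ∣ y) {n : ℕ} (h₁ : p ^ n ∣ a₁ * x ^ 2 + 2 * b₁ * x * y + c₁ * y ^ 2)
    (h₂ : p ^ n ∣ a₂ * x ^ 2 + 2 * b₂ * x * y + c₂ * y ^ 2) :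
    p ^ n ∣ res₂ a₁ b₁ c₁ a₂ b₂ c₂ := by
  rcases hxy with hx | hy
  · have h := dvd_mul_res₂_of_dvd (a₁ := c₁) (b₁ := b₁) (c₁ := a₁) (a₂ := c₂) (b₂ := b₂)
      (c₂ := a₂) (x := y) (y := x) (h₁.trans (Eq.dvd (by ring))) (h₂.trans (Eq.dvd (by ring)))
    rw [show res₂ c₁ b₁ a₁ c₂ b₂ a₂ = res₂ a₁ b₁ c₁ a₂ b₂ c₂ by unfold res₂; ring] at h
    exact hp.pow_dvd_of_dvd_mul_left n (fun h => hx (hp.dvd_of_dvd_pow h)) h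
  · exact hp.pow_dvd_of_dvd_mul_left n (fun h => hy (hp.dvd_of_dvd_pow h))
      (dvd_mul_res₂_of_dvd h₁ h₂)

theorem Nat.Prime.not_dvd_or_not_dvd_of_gcd_pow_eq_one {p x y N : ℕ} (hp : p.Prime)
    (hN : N ≠ 0) (h : Nat.gcd (Nat.gcd x y) (p ^ N) = 1) : ¬p ∣ x ∨ ¬p ∣ y := by
  by_contra! hxy
  exact hp.one_lt.ne' <| Nat.dvd_one.1 <|
    h ▸ Nat.dvd_gcd (Nat.dvd_gcd hxy.1 hxy.2) (dvd_pow_self p hN)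

section Forms

variable {g : ℕ} {a b c : Fin g → ℤ}

def prodRes₂ (a b c : Fin g → ℤ) : ℤ :=
  ∏ i, ∏ j ∈ univ.erase i, res₂ (a i) (b i) (c i) (a j) (b j) (c j)

theorem coeff_ne_zero_of_Dconst_ne_zero (hD : Dconst g a b c ≠ 0) (i : Fin g) :
    a i ≠ 0 ∧ c i ≠ 0 ∧ b i ^ 2 - a i * c i ≠ 0 := by
  simp only [Dconst, mul_ne_zero_iff, prod_ne_zero_iff] at hD
  obtain ⟨⟨ha, hc⟩, hδ⟩ := hD.1.2 i (mem_univ i)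
  exact ⟨ha, hc, hδ⟩

theorem prodRes₂_ne_zero (hD : Dconst g a b c ≠ 0) : prodRes₂ a b c ≠ 0 := by
  simp only [Dconst, mul_ne_zero_iff, prod_ne_zero_iff, mem_Ioi] at hD
  refine prod_ne_zero_iff.2 fun i _ => prod_ne_zero_iff.2 fun j hj => ?_
  rcases (ne_of_mem_erase hj).lt_or_gt with h | h
  · exact res₂_comm .. ▸ hD.2 j (mem_univ j) i h
  · exact hD.2 i (mem_univ i) j h

theorem pow_sum_sub_dvd_prod_res₂ {p : ℕ} (hp : p.Prime) {e : Fin g → ℕ} {m : Fin g}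
    (hm : ∀ i, e i ≤ e m) {x : ℤ × ℤ} (hx : ¬(p : ℤ) ∣ x.1 ∨ ¬(p : ℤ) ∣ x.2)
    (hq : ∀ i, (p : ℤ) ^ e i ∣ qf a b c i x) :
    (p : ℤ) ^ (∑ i, e i - e m) ∣ prodRes₂ a b c := by
  rw [prodRes₂, ← add_sum_erase _ _ (mem_univ m), Nat.add_sub_cancel_left, ← prod_pow_eq_pow_sum]
  refine (prod_dvd_prod_of_dvd _ _ fun i hi => ?_).trans
    (prod_dvd_prod_of_subset _ _ _ (subset_univ _))
  refine (pow_dvd_res₂_of_pow_dvd (Nat.prime_iff_prime_int.1 hp) hx (hq i)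
    ((pow_dvd_pow _ (hm i)).trans (hq m))).trans (dvd_prod_of_mem _ ?_)
  exact mem_erase.2 ⟨(ne_of_mem_erase hi).symm, mem_univ m⟩

theorem rhostar_prime_pow_le (hD : Dconst g a b c ≠ 0) {p : ℕ} (hp : p.Prime)
    {e : Fin g → ℕ} {m : Fin g} (hm : ∀ i, e i ≤ e m) (hS : ∑ i, e i ≠ 0) :
    rhostar g a b c (fun i => p ^ e i) ≤
      2 * (16 * (b m ^ 2 - a m * c m)).natAbs * ((2 * a m).natAbs + (2 * c m).natAbs) *
        p ^ e m * (prodRes₂ a b c).natAbs ^ 2 := by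
  set S := ∑ i, e i
  rw [rhostar, prod_pow_eq_pow_sum]
  set F := {x ∈ range (p ^ S) ×ˢ range (p ^ S) |
    (∀ i, ((p ^ e i : ℕ) : ℤ) ∣ qf a b c i (x.1, x.2)) ∧ Nat.gcd (Nat.gcd x.1 x.2) (p ^ S) = 1}
  have hF : ∀ x ∈ F, (∀ i, (p : ℤ) ^ e i ∣ qf a b c i (x.1, x.2)) ∧ (¬p ∣ x.1 ∨ ¬p ∣ x.2) := by
    intro x hx
    obtain ⟨-, hq, hgcd⟩ := mem_filter.1 hx
    exact ⟨by exact_mod_cast hq, hp.not_dvd_or_not_dvd_of_gcd_pow_eq_one hS hgcd⟩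
  rcases F.eq_empty_or_nonempty with hF₀ | ⟨x, hx⟩
  · simp [hF₀]
  have hpR : p ^ (S - e m) ≤ (prodRes₂ a b c).natAbs := by
    obtain ⟨hq, hxp⟩ := hF x hx
    refine Nat.le_of_dvd (Int.natAbs_pos.2 (prodRes₂_ne_zero hD)) (Int.natCast_dvd.1 ?_)
    exact_mod_cast pow_sum_sub_dvd_prod_res₂ hp hm
      (by simpa only [Int.natCast_dvd_natCast] using hxp) hq
  obtain ⟨ha, hc, hδ⟩ := coeff_ne_zero_of_Dconst_ne_zero hD m
  calc #F ≤ #{x ∈ range (p ^ S) ×ˢ range (p ^ S) |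
        (p : ℤ) ^ e m ∣ a m * (x.1 : ℤ) ^ 2 + 2 * b m * x.1 * x.2 + c m * (x.2 : ℤ) ^ 2 ∧
          (¬p ∣ x.1 ∨ ¬p ∣ x.2)} :=
        card_le_card fun x hx => mem_filter.2 ⟨(mem_filter.1 hx).1, (hF x hx).1 m, (hF x hx).2⟩
    _ ≤ _ := card_filter_pow_dvd_form_primitive_le hp ha hc hδ
        (single_le_sum (fun i _ => Nat.zero_le _) (mem_univ m))
    _ ≤ _ := by gcongr

end Forms

theorem stmt5_general (g : ℕ) (hg : 2 ≤ g) (a b c : Fin g → ℤ)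
    (hD : Dconst g a b c ≠ 0) :
    ∃ C : ℕ, 0 < C ∧ ∀ p : ℕ, p.Prime → ∀ e : Fin g → ℕ,
      rhostar g a b c (fun i => p ^ e i) ≤ C * p ^ (Finset.univ.sup e) := by
  set R := prodRes₂ a b c
  set κ : Fin g → ℕ := fun i =>
    2 * (16 * (b i ^ 2 - a i * c i)).natAbs * ((2 * a i).natAbs + (2 * c i).natAbs)
  refine ⟨(∑ i, κ i) * R.natAbs ^ 2 + 1, Nat.succ_pos _, fun p hp e => ?_⟩
  obtain ⟨m, -, hm⟩ := univ.exists_mem_eq_sup (univ_nonempty_iff.2 ⟨⟨0, by omega⟩⟩) e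
  have hem : ∀ i, e i ≤ e m := fun i => hm ▸ le_sup (mem_univ i)
  have hmS : e m ≤ ∑ i, e i := single_le_sum (fun i _ => Nat.zero_le _) (mem_univ m)
  rw [hm]
  obtain hS | hS := eq_or_ne (∑ i, e i) 0
  · calc rhostar g a b c (fun i => p ^ e i) ≤ #(range 1 ×ˢ range 1) := by
          rw [rhostar, prod_pow_eq_pow_sum, hS, pow_zero]; exact card_filter_le _ _
      _ ≤ _ := by simp [show e m = 0 by omega]
  calc rhostar g a b c (fun i => p ^ e i) ≤ κ m * p ^ e m * R.natAbs ^ 2 :=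
        rhostar_prime_pow_le hD hp hem hS
    _ ≤ (∑ i, κ i) * p ^ e m * R.natAbs ^ 2 := by
        gcongr; exact single_le_sum (fun i _ => Nat.zero_le _) (mem_univ m)
    _ ≤ ((∑ i, κ i) * R.natAbs ^ 2 + 1) * p ^ e m := by
        rw [add_one_mul, mul_right_comm]; exact Nat.le_add_right _ _

/-- a uniform upper bound `ρ*(p^{e₁},…,p^{e_g}) ≤ C·p^{max eᵢ}`. -/
theorem stmt5 (g : ℕ) (hg : 2 ≤ g) (a b c : Fin g → ℤ)
    (hirr : ∀ i, ¬ IsSquare (b i ^ 2 - a i * c i))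
    (hD : Dconst g a b c ≠ 0) :
    ∃ C : ℕ, 0 < C ∧ ∀ p : ℕ, p.Prime → ∀ e : Fin g → ℕ,
      rhostar g a b c (fun i => p ^ e i) ≤ C * p ^ (Finset.univ.sup e) :=
  stmt5_general g hg a b c hD
end

section
/- For every real η ≥ 1 there exists a constant C_η > 0 such that for every positive integer n there is a positive integer m with m ∣ n, m ≤ n^{1/η}, and h(n) ≤ C_η · h(m)^{1+⌊η⌋}. -/
/-!
Since `h = 1 * d²` is multiplicative with `h(p^a) = ∑_{i ≤ a} (i+1)²`, write
`n = ∏_a (∏ S_a)^a`, where `S_a` is the set of primes dividing `n` exactly `a` times, and choose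
a divisor of each block separately, with `k = 1 + ⌊η⌋` (so that `m^k ≤ n` gives `m ≤ n^{1/η}`).
If `a ≥ k⁴`, take `(∏ S_a)^⌊a/k⌋`: as `h(p^a) ≍ a³`, one has `h(p^a) ≤ h(p^{⌊a/k⌋})^k`.
If `a < k⁴`, take `(∏ T)^a` for the `⌊|S_a|/k⌋` smallest primes `T ⊆ S_a`, so that
`(∏ T)^k ≤ ∏ S_a`; this loses at most `k - 1` factors `h(p^a)`, hence a factor bounded in
terms of `k` once all fewer than `k⁴` such blocks are taken together.
-/

open Finset

/-- `h(n) = Σ_{a ∣ n} d(a)²`, where `d` is the number-of-divisors function. -/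
def hfun (n : ℕ) : ℕ := ∑ a ∈ n.divisors, (a.divisors.card) ^ 2

open ArithmeticFunction
open scoped ArithmeticFunction.sigma ArithmeticFunction.zeta Function

def hfunPrimePow (a : ℕ) : ℕ := ∑ i ∈ range (a + 1), (i + 1) ^ 2

lemma succ_sq_le_hfunPrimePow (a : ℕ) : (a + 1) ^ 2 ≤ hfunPrimePow a :=
  single_le_sum (f := fun i ↦ (i + 1) ^ 2) (fun _ _ ↦ Nat.zero_le _) (self_mem_range_succ a)

lemma one_le_hfunPrimePow (a : ℕ) : 1 ≤ hfunPrimePow a :=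
  le_trans (Nat.one_le_pow _ _ a.succ_pos) (succ_sq_le_hfunPrimePow a)

lemma hfunPrimePow_le_succ_pow_three (a : ℕ) : hfunPrimePow a ≤ (a + 1) ^ 3 :=
  calc hfunPrimePow a ≤ ∑ _i ∈ range (a + 1), (a + 1) ^ 2 :=
        sum_le_sum fun i hi ↦ Nat.pow_le_pow_left (mem_range.1 hi) 2
    _ = (a + 1) ^ 3 := by rw [sum_const, card_range, smul_eq_mul]; ring

lemma hfunPrimePow_le_pow_div {k a : ℕ} (hk : 2 ≤ k) (ha : k ^ 4 ≤ a) :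
    hfunPrimePow a ≤ hfunPrimePow (a / k) ^ k := by
  set b := a / k
  have hk0 : 0 < k := by omega
  have hb : k ^ 3 ≤ b := (Nat.le_div_iff_mul_le hk0).2 (by rw [← pow_succ]; exact ha)
  have ha_lt : a < k * (b + 1) := Nat.lt_mul_div_succ a hk0
  calc hfunPrimePow a ≤ (a + 1) ^ 3 := hfunPrimePow_le_succ_pow_three a
    _ ≤ (k * (b + 1)) ^ 3 := Nat.pow_le_pow_left ha_lt 3
    _ = k ^ 3 * (b + 1) ^ 3 := mul_pow _ _ _
    _ ≤ (b + 1) * (b + 1) ^ 3 := Nat.mul_le_mul_right _ (by omega)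
    _ = ((b + 1) ^ 2) ^ 2 := by ring
    _ ≤ hfunPrimePow b ^ 2 := Nat.pow_le_pow_left (succ_sq_le_hfunPrimePow b) 2
    _ ≤ hfunPrimePow b ^ k := Nat.pow_le_pow_right (one_le_hfunPrimePow b) hk

lemma hfun_eq_zeta_mul : hfun = ⇑(ζ * (σ 0).pmul (σ 0)) := by
  funext n
  rw [hfun, zeta_mul_apply]
  exact sum_congr rfl fun i _ ↦ by rw [pmul_apply, sigma_zero_apply, sq]

lemma isMultiplicative_zeta_mul_pmul_sigma_zero :
    (ζ * (σ 0).pmul (σ 0) : ArithmeticFunction ℕ).IsMultiplicative :=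
  isMultiplicative_zeta.mul (isMultiplicative_sigma.pmul isMultiplicative_sigma)

lemma hfun_mul {u v : ℕ} (h : u.Coprime v) : hfun (u * v) = hfun u * hfun v := by
  simp only [hfun_eq_zeta_mul, isMultiplicative_zeta_mul_pmul_sigma_zero.map_mul_of_coprime h]

lemma hfun_prime_pow {p : ℕ} (hp : p.Prime) (a : ℕ) : hfun (p ^ a) = hfunPrimePow a := by
  rw [hfun, Nat.divisors_prime_pow hp, sum_map]
  refine sum_congr rfl fun i _ ↦ ?_
  change #(p ^ i).divisors ^ 2 = _
  rw [← sigma_zero_apply, sigma_zero_apply_prime_pow hp]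

lemma hfun_prod_pow {S : Finset ℕ} (hS : ∀ p ∈ S, p.Prime) (a : ℕ) :
    hfun ((∏ p ∈ S, p) ^ a) = hfunPrimePow a ^ #S := by
  rw [← prod_pow, hfun_eq_zeta_mul, isMultiplicative_zeta_mul_pmul_sigma_zero.map_prod _ S
    fun p hp q hq hpq ↦ Nat.coprime_pow_primes a a (hS p hp) (hS q hq) hpq, ← prod_const]
  exact prod_congr rfl fun p hp ↦ by rw [← hfun_eq_zeta_mul, hfun_prime_pow (hS p hp)]

/-- Take the least element together with `k - 1` others, and recurse on the rest. -/
lemma exists_subset_card_ge_pow_prod_le {k : ℕ} (hk : 0 < k) (j : ℕ) {S : Finset ℕ}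
    (hS : ∀ x ∈ S, 1 ≤ x) (hj : j * k ≤ #S) :
    ∃ T ⊆ S, j ≤ #T ∧ (∏ x ∈ T, x) ^ k ≤ ∏ x ∈ S, x := by
  induction j generalizing S with
  | zero => exact ⟨∅, empty_subset S, le_rfl, by simpa using one_le_prod' hS⟩
  | succ j ih =>
    rw [add_mul, one_mul] at hj
    have hne : S.Nonempty := card_pos.1 (by omega)
    set x := S.min' hne
    have hx : x ∈ S := S.min'_mem hne
    obtain ⟨E, hE, hEcard⟩ := exists_subset_card_eq (s := S.erase x) (n := k - 1)
      (by rw [card_erase_of_mem hx]; omega)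
    have hxE : x ∉ E := fun h ↦ notMem_erase x S (hE h)
    set U := insert x E
    have hUS : U ⊆ S := insert_subset hx (hE.trans (erase_subset _ _))
    have hUcard : #U = k := by rw [card_insert_of_notMem hxE, hEcard]; omega
    obtain ⟨T, hT, hTcard, hTprod⟩ := ih (S := S \ U) (fun y hy ↦ hS y (sdiff_subset hy))
      (by rw [card_sdiff_of_subset hUS, hUcard]; omega)
    have hxT : x ∉ T := fun h ↦ (mem_sdiff.1 (hT h)).2 (mem_insert_self x E)
    have hxU : x ^ k ≤ ∏ y ∈ U, y :=
      hUcard ▸ pow_card_le_prod U id x fun y hy ↦ S.min'_le y (hUS hy)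
    refine ⟨insert x T, insert_subset hx (hT.trans sdiff_subset),
      by rw [card_insert_of_notMem hxT]; omega, ?_⟩
    calc (∏ y ∈ insert x T, y) ^ k = x ^ k * (∏ y ∈ T, y) ^ k := by
          rw [prod_insert hxT, mul_pow]
      _ ≤ (∏ y ∈ U, y) * ∏ y ∈ S \ U, y := Nat.mul_le_mul hxU hTprod
      _ = ∏ y ∈ S, y := by rw [mul_comm, prod_sdiff hUS]

def HasGoodDivisor (k C n : ℕ) : Prop :=
  ∃ m, m ∣ n ∧ m ^ k ≤ n ∧ hfun n ≤ C * hfun m ^ k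

namespace HasGoodDivisor

variable {k C C' u v : ℕ}

lemma one (k : ℕ) : HasGoodDivisor k 1 1 :=
  ⟨1, dvd_rfl, by simp, by simp [hfun]⟩

lemma mono (h : HasGoodDivisor k C u) (hC : C ≤ C') : HasGoodDivisor k C' u := by
  obtain ⟨m, hm, hmk, hmh⟩ := h
  exact ⟨m, hm, hmk, hmh.trans (Nat.mul_le_mul_right _ hC)⟩

lemma mul (huv : u.Coprime v) (hu : HasGoodDivisor k C u) (hv : HasGoodDivisor k C' v) :
    HasGoodDivisor k (C * C') (u * v) := by
  obtain ⟨m, hm, hmk, hmh⟩ := hu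
  obtain ⟨m', hm', hmk', hmh'⟩ := hv
  refine ⟨m * m', mul_dvd_mul hm hm', mul_pow m m' k ▸ Nat.mul_le_mul hmk hmk', ?_⟩
  rw [hfun_mul huv, hfun_mul ((huv.coprime_dvd_left hm).coprime_dvd_right hm')]
  calc hfun u * hfun v ≤ (C * hfun m ^ k) * (C' * hfun m' ^ k) := Nat.mul_le_mul hmh hmh'
    _ = C * C' * (hfun m * hfun m') ^ k := by ring

lemma prod {ι : Type*} {s : Finset ι} {g C : ι → ℕ}
    (hs : (s : Set ι).Pairwise (Nat.Coprime on g))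
    (h : ∀ i ∈ s, HasGoodDivisor k (C i) (g i)) :
    HasGoodDivisor k (∏ i ∈ s, C i) (∏ i ∈ s, g i) := by
  classical
  induction s using Finset.induction_on with
  | empty => exact one k
  | insert i s hi ih =>
    rw [coe_insert, Set.pairwise_insert_of_symm] at hs
    rw [prod_insert hi, prod_insert hi]
    exact mul (Nat.Coprime.prod_right fun j hj ↦ hs.2 j hj (ne_of_mem_of_not_mem hj hi).symm)
      (h i (mem_insert_self i s)) (ih hs.1 fun j hj ↦ h j (mem_insert_of_mem hj))

end HasGoodDivisor

section Blocks

variable {S : Finset ℕ} (hS : ∀ p ∈ S, p.Prime)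
include hS

lemma hasGoodDivisor_prod_pow_of_pow_four_le {k a : ℕ} (hk : 2 ≤ k) (ha : k ^ 4 ≤ a) :
    HasGoodDivisor k 1 ((∏ p ∈ S, p) ^ a) := by
  have hY : 1 ≤ ∏ p ∈ S, p := one_le_prod' fun p hp ↦ (hS p hp).one_le
  refine ⟨(∏ p ∈ S, p) ^ (a / k), pow_dvd_pow _ (Nat.div_le_self a k), ?_, ?_⟩
  · rw [← pow_mul]
    exact Nat.pow_le_pow_right hY (Nat.div_mul_le_self a k)
  · rw [hfun_prod_pow hS, hfun_prod_pow hS, one_mul, ← pow_mul, mul_comm, pow_mul]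
    exact Nat.pow_le_pow_left (hfunPrimePow_le_pow_div hk ha) _

lemma hasGoodDivisor_prod_pow {k : ℕ} (hk : 0 < k) (a : ℕ) :
    HasGoodDivisor k (hfunPrimePow a ^ (k - 1)) ((∏ p ∈ S, p) ^ a) := by
  obtain ⟨T, hTS, hTcard, hTprod⟩ := exists_subset_card_ge_pow_prod_le hk (#S / k)
    (fun p hp ↦ (hS p hp).one_le) (Nat.div_mul_le_self _ _)
  refine ⟨(∏ p ∈ T, p) ^ a, pow_dvd_pow_of_dvd (prod_dvd_prod_of_subset _ _ _ hTS) a,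
    ?_, ?_⟩
  · rw [← pow_mul, mul_comm, pow_mul]
    exact Nat.pow_le_pow_left hTprod a
  · have hcard : #S ≤ (k - 1) + #T * k := by
      have := Nat.div_add_mod' #S k
      have := Nat.mod_lt #S hk
      have := Nat.mul_le_mul_right k hTcard
      omega
    rw [hfun_prod_pow hS, hfun_prod_pow (fun p hp ↦ hS p (hTS hp)), ← pow_mul, ← pow_add]
    exact Nat.pow_le_pow_right (one_le_hfunPrimePow a) hcard

end Blocks

lemma prod_pow_factorization_fibers {n : ℕ} (hn : n ≠ 0) :
    ∏ a ∈ n.primeFactors.image n.factorization,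
      (∏ p ∈ n.primeFactors with n.factorization p = a, p) ^ a = n := by
  conv_rhs => rw [Nat.prod_primeFactors_pow_factorization hn,
    ← prod_fiberwise_of_maps_to fun p hp ↦ mem_image_of_mem n.factorization hp]
  refine prod_congr rfl fun a _ ↦ ?_
  rw [← prod_pow]
  exact prod_congr rfl fun p hp ↦ by rw [(mem_filter.1 hp).2]

theorem hasGoodDivisor_of_ne_zero {k n : ℕ} (hk : 2 ≤ k) (hn : n ≠ 0) :
    HasGoodDivisor k (∏ a ∈ range (k ^ 4), hfunPrimePow a ^ (k - 1)) n := by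
  set P := n.primeFactors
  set ν := n.factorization
  have hprime : ∀ a, ∀ p ∈ {p ∈ P | ν p = a}, p.Prime :=
    fun _ _ hp ↦ Nat.prime_of_mem_primeFactors (mem_filter.1 hp).1
  have hcop : ((P.image ν : Finset ℕ) : Set ℕ).Pairwise
      (Nat.Coprime on fun a ↦ (∏ p ∈ P with ν p = a, p) ^ a) := by
    intro a _ b _ hab
    refine Nat.Coprime.pow _ _ (Nat.Coprime.prod_left fun p hp ↦ Nat.Coprime.prod_right
      fun q hq ↦ (Nat.coprime_primes (hprime a p hp) (hprime b q hq)).2 ?_)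
    rintro rfl
    exact hab ((mem_filter.1 hp).2.symm.trans (mem_filter.1 hq).2)
  have hblock : ∀ a, HasGoodDivisor k (if a < k ^ 4 then hfunPrimePow a ^ (k - 1) else 1)
      ((∏ p ∈ P with ν p = a, p) ^ a) := by
    intro a
    split_ifs with ha
    · exact hasGoodDivisor_prod_pow (hprime a) (by omega) a
    · exact hasGoodDivisor_prod_pow_of_pow_four_le (hprime a) hk (not_lt.1 ha)
  have := HasGoodDivisor.prod hcop fun a _ ↦ hblock a
  rw [prod_pow_factorization_fibers hn, ← prod_filter] at this
  exact this.mono <| prod_le_prod_of_subset_of_one_le'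
    (fun a ha ↦ mem_range.2 (mem_filter.1 ha).2)
    fun a _ _ ↦ Nat.one_le_pow _ _ (one_le_hfunPrimePow a)

lemma le_rpow_one_div_of_pow_le {x y η : ℝ} {k : ℕ} (hx : 0 ≤ x) (hy : 1 ≤ y) (hη : 0 < η)
    (hηk : η ≤ k) (h : x ^ k ≤ y) : x ≤ y ^ (1 / η) := by
  have hk : (0 : ℝ) < k := hη.trans_le hηk
  calc x = (x ^ k) ^ (k⁻¹ : ℝ) :=
        (Real.pow_rpow_inv_natCast hx (by exact_mod_cast hk.ne')).symm
    _ ≤ y ^ (k⁻¹ : ℝ) := Real.rpow_le_rpow (by positivity) h (by positivity)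
    _ ≤ y ^ (1 / η) := Real.rpow_le_rpow_of_exponent_le hy (one_div η ▸ inv_anti₀ hη hηk)

/-- for every `η ≥ 1` and every `n` there is a small divisor `m ≤ n^{1/η}`
with `h(n) ≪_η h(m)^{1+⌊η⌋}`. -/
theorem stmt11 (η : ℝ) (hη : 1 ≤ η) :
    ∃ C : ℝ, 0 < C ∧ ∀ n : ℕ, 0 < n → ∃ m : ℕ, 0 < m ∧ m ∣ n ∧
      (m : ℝ) ≤ (n : ℝ) ^ (1 / η) ∧
      (hfun n : ℝ) ≤ C * (hfun m : ℝ) ^ (1 + ⌊η⌋₊) := by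
  set k := 1 + ⌊η⌋₊
  have hk : 2 ≤ k := by have : 1 ≤ ⌊η⌋₊ := Nat.le_floor (by exact_mod_cast hη); omega
  have hηk : η ≤ k := by push_cast [k]; linarith [Nat.lt_floor_add_one η]
  set C := ∏ a ∈ range (k ^ 4), hfunPrimePow a ^ (k - 1)
  have hC : 0 < C := prod_pos fun a _ ↦ pow_pos (one_le_hfunPrimePow a) _
  refine ⟨C, by exact_mod_cast hC, fun n hn ↦ ?_⟩
  obtain ⟨m, hm, hmk, hmh⟩ := hasGoodDivisor_of_ne_zero hk hn.ne'
  refine ⟨m, Nat.pos_of_dvd_of_pos hm hn, hm, le_rpow_one_div_of_pow_le (Nat.cast_nonneg m)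
    (by exact_mod_cast hn) (by linarith) hηk (by exact_mod_cast hmk), by exact_mod_cast hmh⟩
end

section
/- For all positive integers c and b, the set {d ∈ ℤ, d ≥ 1 : d / gcd(d, b²) = c} is finite and has at most ∏_{p^β ∥ b} (2β + 1) elements, where the product is over the primes p dividing b and β = v_p(b) is the exact exponent of p in b. -/
open Finset

/-- for fixed `c, b`, the set of `d` with `d/gcd(d,b²) = c` is finite,
of cardinality at most `∏_{p^β ∥ b} (2β+1)`. -/
theorem stmt13 (c b : ℕ) (hc : 0 < c) (hb : 0 < b) :
    {d : ℕ | 1 ≤ d ∧ d / Nat.gcd d (b ^ 2) = c}.Finite ∧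
      {d : ℕ | 1 ≤ d ∧ d / Nat.gcd d (b ^ 2) = c}.ncard ≤
        ∏ p ∈ b.primeFactors, (2 * b.factorization p + 1) := by
  have hb2 : b ^ 2 ≠ 0 := pow_ne_zero 2 hb.ne'
  have hsub : {d : ℕ | 1 ≤ d ∧ d / Nat.gcd d (b ^ 2) = c} ⊆
      (fun g => c * g) '' ↑((b ^ 2).divisors) := by
    rintro d ⟨hd1, hdc⟩
    refine ⟨Nat.gcd d (b ^ 2), ?_, ?_⟩
    · simp only [Finset.coe_sort_coe, Finset.mem_coe, Nat.mem_divisors]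
      exact ⟨Nat.gcd_dvd_right d (b ^ 2), hb2⟩
    · have hgd : Nat.gcd d (b ^ 2) ∣ d := Nat.gcd_dvd_left d (b ^ 2)
      have := Nat.div_mul_cancel hgd
      rw [hdc] at this
      exact this
  have hfin : ((fun g => c * g) '' ↑((b ^ 2).divisors)).Finite :=
    ((b ^ 2).divisors.finite_toSet).image _
  refine ⟨hfin.subset hsub, ?_⟩
  have hcard : (b ^ 2).divisors.card = ∏ p ∈ b.primeFactors, (2 * b.factorization p + 1) := by
    rw [Nat.card_divisors hb2, Nat.primeFactors_pow b two_ne_zero]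
    exact Finset.prod_congr rfl fun p _ => by simp [Nat.factorization_pow]
  calc {d : ℕ | 1 ≤ d ∧ d / Nat.gcd d (b ^ 2) = c}.ncard
      ≤ ((fun g => c * g) '' ↑((b ^ 2).divisors)).ncard := Set.ncard_le_ncard hsub hfin
    _ ≤ (↑((b ^ 2).divisors) : Set ℕ).ncard := Set.ncard_image_le ((b ^ 2).divisors.finite_toSet)
    _ = (b ^ 2).divisors.card := by simp [Set.ncard_coe_finset]
    _ = _ := hcard
end

section
/- Let d₁,…,d_g and b be positive integers. If b divides ψ(d₁,…,d_g), then b divides the product gcd(d₁,b²)·gcd(d₂,b²)⋯gcd(d_g,b²). -/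
open Finset

/-- `b ∣ ψ(d₁,…,d_g)` implies `b ∣ gcd(d₁,b²)⋯gcd(d_g,b²)`. -/
theorem stmt14 (g : ℕ) (hg : 1 ≤ g) (d : Fin g → ℕ) (hd : ∀ i, 0 < d i)
    (b : ℕ) (hb : 0 < b) (hdvd : b ∣ psi g d) :
    b ∣ ∏ i, Nat.gcd (d i) (b ^ 2) := by
  have hP : 0 < ∏ i, Nat.gcd (d i) (b ^ 2) :=
    Finset.prod_pos fun i _ => Nat.gcd_pos_of_pos_left _ (hd i)
  have hpsi_pos : 0 < psi g d := by
    apply Finset.prod_pos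
    intro p hp
    exact pow_pos (Nat.pos_of_mem_primeFactors hp) _
  rw [← Nat.factorization_le_iff_dvd hb.ne' hP.ne']
  rw [Finsupp.le_def]
  intro p
  set v := b.factorization p with hv
  rcases Nat.eq_zero_or_pos v with h0 | hvpos
  · simp [h0.symm ▸ (Nat.zero_le _), ← hv, h0]
  -- p is prime
  have hp : p.Prime := by
    by_contra hnp
    rw [Nat.factorization_eq_zero_of_not_prime b hnp] at hv
    omega
  -- bound v by factorization of psi at p
  have hle : v ≤ (psi g d).factorization p :=
    (Nat.factorization_le_iff_dvd hb.ne' hpsi_pos.ne').mpr hdvd p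
  have hpsifact : (psi g d).factorization p =
      if p ∈ (∏ i, d i).primeFactors then
        ((Finset.univ.sup fun i => (d i).factorization p) + 1) / 2 else 0 := by
    unfold psi
    rw [Nat.factorization_prod (fun q hq => (pow_pos (Nat.pos_of_mem_primeFactors hq) _).ne')]
    rw [Finset.sum_apply']
    rw [Finset.sum_congr rfl (fun q hq => show ((q:ℕ) ^ _).factorization p = if q = p then ((Finset.univ.sup fun i => (d i).factorization q) + 1) / 2 else 0 by
      rw [Nat.factorization_pow, Finsupp.smul_apply, (Nat.prime_of_mem_primeFactors hq).factorization, Finsupp.single_apply]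
      split_ifs with h <;> simp [h])]
    rw [Finset.sum_ite_eq']
  rw [hpsifact] at hle
  have hmem : p ∈ (∏ i, d i).primeFactors := by
    by_contra hm
    simp [hm] at hle
    omega
  rw [if_pos hmem] at hle
  -- RHS computation
  have hrhs : (∏ i, Nat.gcd (d i) (b ^ 2)).factorization p =
      ∑ i, ((d i).factorization p ⊓ 2 * v) := by
    rw [Nat.factorization_prod (fun i _ => (Nat.gcd_pos_of_pos_left _ (hd i)).ne')]
    rw [Finset.sum_apply']
    apply Finset.sum_congr rfl
    intro i _
    rw [Nat.factorization_gcd (hd i).ne' (pow_pos hb 2).ne', Finsupp.inf_apply,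
      Nat.factorization_pow, Finsupp.smul_apply]
    simp [hv]
  rw [hrhs]
  -- pick i₀ achieving the sup
  obtain ⟨i₀, hi₀⟩ := Finset.exists_mem_eq_sup Finset.univ
    (Finset.univ_nonempty_iff.mpr (Fin.pos_iff_nonempty.mp hg)) (fun i => (d i).factorization p)
  have hterm : v ≤ (d i₀).factorization p ⊓ 2 * v := by
    rw [hi₀.2] at hle
    exact le_inf (by omega) (by omega)
  calc v ≤ (d i₀).factorization p ⊓ 2 * v := hterm
    _ ≤ ∑ i, ((d i).factorization p ⊓ 2 * v) :=
      Finset.single_le_sum (f := fun i => (d i).factorization p ⊓ 2 * v) (fun i _ => Nat.zero_le _) (Finset.mem_univ i₀)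
end

section
/- Let d be a squarefree positive integer and let Ω be a finite subset of ℤ². Then #{x ∈ Ω : d ∣ q₁(x)·q₂(x)⋯q_g(x)} = Σ μ(d)·μ(c₁)⋯μ(c_g) · #{x ∈ Ω : c_i ∣ q_i(x) for all i}, where the sum is over all g-tuples (c₁,…,c_g) of positive integers with c_i ∣ d for every i and d ∣ c₁·c₂⋯c_g, and μ denotes the Möbius function. -/
/-!
Both sides are sums over `x ∈ Ω`, so it suffices to compare the terms of a single `x`, where only
the numbers `n_i = |q_i(x)|` matter. The basic fact is that for squarefree `e`, `∑_{t ∣ e, (t, n) = 1} μ t = [e ∣ n]`, since these `t` are the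
divisors of `e / gcd(e, n)`. Applied to `[d ∣ ∏ c_i]` it turns the sum over tuples into
`∑_{t ∣ d} μ t ∏_i ∑_{c ∣ gcd(d, n_i), (c, t) = 1} μ c = ∑_{t ∣ d} μ t [∀ i, gcd(d, n_i) ∣ t]`.
Substituting `t = d / s`, squarefreeness gives `μ (d / s) = μ d μ s` and turns the condition into
`(s, n_i) = 1` for all `i`, so the basic fact applies once more and leaves `μ(d)² [d ∣ ∏ n_i]`.
-/

open Finset

open ArithmeticFunction
open scoped ArithmeticFunction.Moebius

namespace ArithmeticFunction

theorem moebius_div_of_squarefree {d s : ℕ} (hd : Squarefree d) (hs : s ∣ d) :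
    μ (d / s) = μ d * μ s := by
  obtain ⟨k, rfl⟩ := hs
  have hcop : s.Coprime k := Nat.coprime_of_squarefree_mul hd
  rw [Nat.mul_div_cancel_left k (Nat.pos_of_ne_zero (left_ne_zero_of_mul hd.ne_zero)),
    isMultiplicative_moebius.map_mul_of_coprime hcop, mul_comm (μ s), mul_assoc,
    ← sq, moebius_sq_eq_one_of_squarefree (Squarefree.of_mul_left hd), mul_one]

end ArithmeticFunction

namespace Nat

theorem sum_divisors_moebius (n : ℕ) : ∑ t ∈ n.divisors, μ t = if n = 1 then 1 else 0 := by
  rw [← coe_mul_zeta_apply, moebius_mul_coe_zeta, one_apply]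

theorem filter_divisors_coprime_of_squarefree {e : ℕ} (he : Squarefree e) (n : ℕ) :
    {t ∈ e.divisors | t.Coprime n} = (e / e.gcd n).divisors := by
  rcases eq_or_ne n 0 with rfl | hn
  · ext t
    simp only [mem_filter, mem_divisors, coprime_zero_right, gcd_zero_right,
      Nat.div_self (pos_of_ne_zero he.ne_zero), divisors_one, mem_singleton]
    exact ⟨And.right, by rintro rfl; exact ⟨⟨one_dvd e, he.ne_zero⟩, rfl⟩⟩
  have hg : e.gcd n ∣ e := e.gcd_dvd_left n
  ext t
  simp only [mem_filter, mem_divisors]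
  constructor
  · rintro ⟨⟨hte, -⟩, htn⟩
    have htg : t.Coprime (e.gcd n) := htn.coprime_dvd_right (e.gcd_dvd_right n)
    refine ⟨htg.dvd_of_dvd_mul_right ?_, ?_⟩
    · rwa [Nat.div_mul_cancel hg]
    · exact (Nat.div_pos (le_of_dvd (pos_of_ne_zero he.ne_zero) hg)
        (gcd_pos_of_pos_right e (pos_of_ne_zero hn))).ne'
  · rintro ⟨hte, -⟩
    exact ⟨⟨hte.trans (Nat.div_dvd_of_dvd hg), he.ne_zero⟩,
      (coprime_div_gcd_of_squarefree he hn).coprime_dvd_left hte⟩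

theorem sum_divisors_moebius_coprime_of_squarefree {e : ℕ} (he : Squarefree e) (n : ℕ) :
    ∑ t ∈ e.divisors with t.Coprime n, μ t = if e ∣ n then 1 else 0 := by
  rw [filter_divisors_coprime_of_squarefree he, sum_divisors_moebius]
  refine if_congr ?_ rfl rfl
  rw [Nat.div_eq_iff_eq_mul_left (gcd_pos_of_pos_left n (pos_of_ne_zero he.ne_zero))
    (e.gcd_dvd_left n), one_mul, eq_comm, gcd_eq_left_iff_dvd]


theorem coprime_gcd_iff_of_dvd {s d : ℕ} (hs : s ∣ d) (n : ℕ) :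
    s.Coprime (d.gcd n) ↔ s.Coprime n := by
  rw [Coprime, Coprime, ← Nat.gcd_assoc, Nat.gcd_eq_left hs]

theorem gcd_dvd_div_iff_coprime {d s : ℕ} (hd : Squarefree d) (hs : s ∣ d) (n : ℕ) :
    d.gcd n ∣ d / s ↔ s.Coprime n := by
  have hsd : s * (d / s) = d := Nat.mul_div_cancel' hs
  have hcop : s.Coprime (d / s) := coprime_of_squarefree_mul (by rwa [hsd])
  rw [← coprime_gcd_iff_of_dvd hs]
  refine ⟨hcop.coprime_dvd_right, fun h => h.symm.dvd_of_dvd_mul_left ?_⟩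
  rw [hsd]
  exact d.gcd_dvd_left n

theorem sum_divisors_moebius_dvd_coprime {d : ℕ} (hd : Squarefree d) (n t : ℕ) :
    ∑ c ∈ d.divisors with c ∣ n ∧ c.Coprime t, μ c = if d.gcd n ∣ t then 1 else 0 := by
  have hdiv : {c ∈ d.divisors | c ∣ n} = (d.gcd n).divisors := by
    rw [← divisors_filter_dvd_of_dvd hd.ne_zero (d.gcd_dvd_left n)]
    refine filter_congr fun c hc => ?_
    rw [dvd_gcd_iff, and_iff_right (dvd_of_mem_divisors hc)]
  rw [← filter_filter, hdiv,
    sum_divisors_moebius_coprime_of_squarefree (hd.squarefree_of_dvd (d.gcd_dvd_left n))]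

theorem sum_divisors_moebius_mul_ite_forall_gcd_dvd {ι : Type*} [Fintype ι] {d : ℕ}
    (hd : Squarefree d) (n : ι → ℕ) :
    ∑ t ∈ d.divisors, μ t * (if ∀ i, d.gcd (n i) ∣ t then 1 else 0) =
      μ d * if d ∣ ∏ i, n i then 1 else 0 := by
  rw [← sum_div_divisors, ← sum_divisors_moebius_coprime_of_squarefree hd, mul_sum, sum_filter]
  refine sum_congr rfl fun s hs => ?_
  have hs : s ∣ d := dvd_of_mem_divisors hs
  simp only [moebius_div_of_squarefree hd hs, gcd_dvd_div_iff_coprime hd hs,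
    ← coprime_fintype_prod_right_iff]
  split_ifs <;> ring

end Nat

theorem ite_dvd_prod_eq_sum_moebius {ι : Type*} [Fintype ι] {d : ℕ} (hd : Squarefree d)
    (c : ι → ℕ) :
    (if d ∣ ∏ i, c i then 1 else 0) =
      ∑ t ∈ d.divisors, μ t * ∏ i, if (c i).Coprime t then 1 else 0 := by
  rw [← Nat.sum_divisors_moebius_coprime_of_squarefree hd, sum_filter]
  refine sum_congr rfl fun t _ => ?_
  simp only [Fintype.prod_boole, Nat.coprime_comm, ← Nat.coprime_fintype_prod_right_iff, mul_ite,
    mul_one, mul_zero]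

theorem sum_moebius_prod_moebius_ite_forall_dvd {ι : Type*} [Fintype ι] [DecidableEq ι] {d : ℕ}
    (hd : Squarefree d) (n : ι → ℕ) :
    ∑ c ∈ Fintype.piFinset (fun _ : ι => d.divisors) with d ∣ ∏ i, c i,
        μ d * (∏ i, μ (c i)) * (if ∀ i, c i ∣ n i then 1 else 0) =
      if d ∣ ∏ i, n i then 1 else 0 := by
  calc _ = μ d * ∑ c ∈ Fintype.piFinset (fun _ : ι => d.divisors),
        (if d ∣ ∏ i, c i then 1 else 0) * ∏ i, if c i ∣ n i then μ (c i) else 0 := by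
          rw [sum_filter, mul_sum]
          refine sum_congr rfl fun c _ => ?_
          rw [Fintype.prod_ite_zero]
          split_ifs <;> ring
    _ = μ d * ∑ t ∈ d.divisors, μ t * ∑ c ∈ Fintype.piFinset (fun _ : ι => d.divisors),
        ∏ i, (if (c i).Coprime t then 1 else 0) * (if c i ∣ n i then μ (c i) else 0) := by
          simp only [ite_dvd_prod_eq_sum_moebius hd, sum_mul, mul_sum, mul_assoc, prod_mul_distrib]
          rw [sum_comm]
    _ = μ d * ∑ t ∈ d.divisors, μ t *
        ∏ i, ∑ c ∈ d.divisors with c ∣ n i ∧ c.Coprime t, μ c := by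
          simp only [prod_univ_sum, sum_filter, boole_mul, ← ite_and, and_comm]
    _ = μ d * ∑ t ∈ d.divisors, μ t * if ∀ i, d.gcd (n i) ∣ t then 1 else 0 := by
          simp only [Nat.sum_divisors_moebius_dvd_coprime hd, Fintype.prod_boole]
    _ = _ := by
          rw [Nat.sum_divisors_moebius_mul_ite_forall_gcd_dvd hd, ← mul_assoc, ← sq,
            moebius_sq_eq_one_of_squarefree hd, one_mul]

open scoped Classical in
theorem stmt15_general (g : ℕ) (a b c : Fin g → ℤ)
    (d : ℕ) (hsf : Squarefree d) (Ω : Finset (ℤ × ℤ)) :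
    ((Ω.filter fun x => (d : ℤ) ∣ ∏ i, qf a b c i x).card : ℤ) =
      ∑ ct ∈ (Fintype.piFinset fun _ : Fin g => d.divisors).filter
          (fun ct => d ∣ ∏ i, ct i),
        ArithmeticFunction.moebius d * (∏ i, ArithmeticFunction.moebius (ct i)) *
          ((Ω.filter fun x => ∀ i, (ct i : ℤ) ∣ qf a b c i x).card : ℤ) := by
  simp only [natCast_card_filter, mul_sum]
  rw [sum_comm]
  refine sum_congr rfl fun x _ => ?_
  have hprod : (∏ i, qf a b c i x).natAbs = ∏ i, (qf a b c i x).natAbs :=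
    map_prod Int.natAbsHom _ _
  simp only [Int.natCast_dvd, hprod]
  convert (sum_moebius_prod_moebius_ite_forall_dvd hsf fun i => (qf a b c i x).natAbs).symm

open scoped Classical in
/-- inclusion–exclusion formula counting points where `d` divides the
product of the forms. -/
theorem stmt15 (g : ℕ) (hg : 2 ≤ g) (a b c : Fin g → ℤ)
    (d : ℕ) (hd : 0 < d) (hsf : Squarefree d) (Ω : Finset (ℤ × ℤ)) :
    ((Ω.filter fun x => (d : ℤ) ∣ ∏ i, qf a b c i x).card : ℤ) =
      ∑ ct ∈ (Fintype.piFinset fun _ : Fin g => d.divisors).filter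
          (fun ct => d ∣ ∏ i, ct i),
        ArithmeticFunction.moebius d * (∏ i, ArithmeticFunction.moebius (ct i)) *
          ((Ω.filter fun x => ∀ i, (ct i : ℤ) ∣ qf a b c i x).card : ℤ) :=
  stmt15_general g a b c d hsf Ω
end

section
/- Assume D ≠ 0 and let p be a prime with p ∤ D; for such p define ω(p) := (ρ(p,1,…,1) + ρ(1,p,1,…,1) + ⋯ + ρ(1,…,1,p) + 1 − g)/p. Then ω(p) = g + Σ_{n=1}^g (δ_n/p) − (1/p)·(g − 1 + Σ_{n=1}^g (δ_n/p)), where (δ_n/p) is the Legendre symbol, and moreover 0 ≤ ω(p) < p. -/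
open Finset

/-!
Modulo a prime `p ∤ D`, `ρ(1,…,p,…,1)` (with `p` in slot `i`) is the number of zeros of `q_i`
in `𝔽_p²`. As `p ∤ a_i`, for fixed `y` the equation `q_i(x, y) = 0` is a genuine quadratic in `x`
with reduced discriminant `y² δ_i`, hence has `1 + (y² δ_i / p)` roots; summing over `y` gives
`p + (δ_i / p)(p - 1)`, which is the formula for `ω(p)`. The bounds then follow from
`|(δ_i / p)| ≤ 1` and `2g < p`, the latter because every prime `≤ 2g` divides `D`.
-/

section QuadraticCounting

variable {F : Type*} [Field F] [Fintype F] [DecidableEq F]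

/-- Completing the square: `x ↦ A x + B` maps the roots of `A x² + 2 B x + C`
onto the square roots of `B² - A C`. -/
theorem card_roots_quadratic (hF : ringChar F ≠ 2) {A : F} (hA : A ≠ 0) (B C : F) :
    (#{x | A * x ^ 2 + 2 * B * x + C = 0} : ℤ) = quadraticChar F (B ^ 2 - A * C) + 1 := by
  rw [← quadraticChar_card_sqrts hF, Set.toFinset_ofPred]
  congr 1
  refine card_equiv ((Equiv.mulLeft₀ A hA).trans (Equiv.addRight B)) fun x => ?_
  have hsq : (A * x + B) ^ 2 - (B ^ 2 - A * C) = A * (A * x ^ 2 + 2 * B * x + C) := by ring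
  change _ ∈ filter _ _ ↔ A * x + B ∈ filter _ _
  simp only [mem_filter, mem_univ, true_and]
  rw [← sub_eq_zero (a := (A * x + B) ^ 2), hsq, mul_eq_zero, or_iff_right hA]

theorem card_zeros_binary_quadratic_form (hF : ringChar F ≠ 2) {A : F} (hA : A ≠ 0) (B C : F) :
    (#{v : F × F | A * v.1 ^ 2 + 2 * B * v.1 * v.2 + C * v.2 ^ 2 = 0} : ℤ)
      = Fintype.card F + quadraticChar F (B ^ 2 - A * C) * (Fintype.card F - 1) := by
  have hfiber (y : F) : (#{x | A * x ^ 2 + 2 * B * x * y + C * y ^ 2 = 0} : ℤ)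
      = quadraticChar F (y ^ 2 * (B ^ 2 - A * C)) + 1 := by
    have := card_roots_quadratic hF hA (B * y) (C * y ^ 2)
    rw [show (B * y) ^ 2 - A * (C * y ^ 2) = y ^ 2 * (B ^ 2 - A * C) by ring] at this
    simpa only [mul_assoc, mul_comm y] using this
  have hchar : ∑ y : F, quadraticChar F (y ^ 2 * (B ^ 2 - A * C))
      = ∑ y ∈ univ.erase (0 : F), quadraticChar F (B ^ 2 - A * C) := by
    rw [← sum_erase (f := fun y => quadraticChar F (y ^ 2 * (B ^ 2 - A * C))) (a := 0) _ (by simp)]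
    exact sum_congr rfl fun y hy => by
      rw [map_mul, quadraticChar_sq_one' (ne_of_mem_erase hy), one_mul]
  rw [card_filter, Fintype.sum_prod_type, sum_comm]
  simp_rw [← card_filter]
  push_cast
  simp_rw [hfiber]
  rw [sum_add_distrib, hchar, sum_const, card_erase_of_mem (mem_univ _), card_univ, sum_const,
    card_univ, nsmul_eq_mul, nsmul_eq_mul, Nat.cast_pred Fintype.card_pos]
  ring

end QuadraticCounting

theorem ZMod.card_filter_range_prod_range (n : ℕ) [NeZero n] (P : ZMod n × ZMod n → Prop)
    [DecidablePred P] :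
    #{x ∈ range n ×ˢ range n | P ((x.1 : ZMod n), (x.2 : ZMod n))} = #{v | P v} := by
  refine card_nbij' (fun x => ((x.1 : ZMod n), (x.2 : ZMod n))) (fun v => (v.1.val, v.2.val))
    ?_ ?_ ?_ ?_
  · intro x hx
    simp_all
  · intro v hv
    simp_all [ZMod.val_lt]
  · intro x hx
    simp only [coe_filter, mem_product, mem_range, Set.mem_ofPred_eq] at hx
    simp [Nat.mod_eq_of_lt hx.1.1, Nat.mod_eq_of_lt hx.1.2]
  · intro v _
    simp

theorem rho_single_eq_card_zeros {g : ℕ} (a b c : Fin g → ℤ) (i : Fin g) (n : ℕ) [NeZero n] :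
    rho g a b c (fun j => if j = i then n else 1) =
      #{v : ZMod n × ZMod n | (a i : ZMod n) * v.1 ^ 2 + 2 * (b i : ZMod n) * v.1 * v.2
        + c i * v.2 ^ 2 = 0} := by
  have hdvd (x : ℕ × ℕ) :
      (∀ j, (((if j = i then n else 1 : ℕ)) : ℤ) ∣ qf a b c j ((x.1 : ℤ), (x.2 : ℤ))) ↔
        (a i : ZMod n) * (x.1 : ZMod n) ^ 2 + 2 * (b i : ZMod n) * (x.1 : ZMod n) * (x.2 : ZMod n)
          + c i * (x.2 : ZMod n) ^ 2 = 0 := by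
    have hq : ((qf a b c i ((x.1 : ℤ), (x.2 : ℤ)) : ℤ) : ZMod n) = (a i : ZMod n) * (x.1 : ZMod n) ^ 2
        + 2 * (b i : ZMod n) * (x.1 : ZMod n) * (x.2 : ZMod n) + c i * (x.2 : ZMod n) ^ 2 := by
      simp [qf]
    rw [← hq, ZMod.intCast_zmod_eq_zero_iff_dvd]
    refine ⟨fun h => by simpa using h i, fun h j => ?_⟩
    split_ifs with hj
    · exact hj ▸ h
    · exact one_dvd _
  unfold rho
  rw [Fintype.prod_ite_eq' i (fun _ => n), filter_congr fun x _ => hdvd x]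
  exact ZMod.card_filter_range_prod_range n
    (fun v => (a i : ZMod n) * v.1 ^ 2 + 2 * (b i : ZMod n) * v.1 * v.2 + c i * v.2 ^ 2 = 0)

theorem rho_single_prime {g : ℕ} (a b c : Fin g → ℤ) (i : Fin g) {p : ℕ} [Fact p.Prime]
    (hp2 : p ≠ 2) (hpa : ¬ (p : ℤ) ∣ a i) :
    (rho g a b c (fun j => if j = i then p else 1) : ℤ)
      = p + legendreSym p (b i ^ 2 - a i * c i) * (p - 1) := by
  have hA : (a i : ZMod p) ≠ 0 := by rwa [Ne, ZMod.intCast_zmod_eq_zero_iff_dvd]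
  have hF : ringChar (ZMod p) ≠ 2 := by rwa [ZMod.ringChar_zmod_n]
  rw [rho_single_eq_card_zeros, card_zeros_binary_quadratic_form hF hA, ZMod.card, legendreSym]
  simp

theorem abs_sum_legendreSym_le_card {ι : Type*} (p : ℕ) [Fact p.Prime] (s : Finset ι)
    (f : ι → ℤ) : |∑ i ∈ s, (legendreSym p (f i) : ℚ)| ≤ #s := by
  refine (abs_sum_le_sum_abs _ _).trans ((sum_le_card_nsmul s _ 1 fun i _ => ?_).trans_eq (by simp))
  rcases quadraticChar_isQuadratic (ZMod p) (f i) with h | h | h <;> simp [legendreSym, h]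

theorem prime_dvd_Dconst {g : ℕ} (a b c : Fin g → ℤ) {q : ℕ} (hq : q.Prime) (hle : q ≤ 2 * g) :
    (q : ℤ) ∣ Dconst g a b c :=
  dvd_mul_of_dvd_left (dvd_mul_of_dvd_left
    (dvd_prod_of_mem _ (mem_filter.2 ⟨mem_range.2 (Nat.lt_succ_of_le hle), hq⟩)) _) _

theorem a_dvd_Dconst {g : ℕ} (a b c : Fin g → ℤ) (i : Fin g) : a i ∣ Dconst g a b c :=
  dvd_mul_of_dvd_left (dvd_mul_of_dvd_right ((dvd_mul_right _ _).trans
    ((dvd_mul_right _ _).trans (dvd_prod_of_mem _ (mem_univ i)))) _) _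

theorem stmt18_general (g : ℕ) (a b c : Fin g → ℤ)
    (p : ℕ) (hp : p.Prime) (hpD : ¬ ((p : ℤ) ∣ Dconst g a b c))
    (w : ℚ)
    (hw : w = ((∑ i : Fin g, (rho g a b c (fun j => if j = i then p else 1) : ℚ)) +
      1 - g) / (p : ℚ)) :
    w = g + (∑ n : Fin g, (@legendreSym p ⟨hp⟩ (b n ^ 2 - a n * c n) : ℚ)) -
        (1 / (p : ℚ)) *
          ((g : ℚ) - 1 + ∑ n : Fin g, (@legendreSym p ⟨hp⟩ (b n ^ 2 - a n * c n) : ℚ)) ∧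
      0 ≤ w ∧ w < p := by
  have : Fact p.Prime := ⟨hp⟩
  have hgp : 2 * g < p := not_le.1 fun h => hpD (prime_dvd_Dconst a b c hp h)
  have hρ (i : Fin g) : (rho g a b c (fun j => if j = i then p else 1) : ℚ)
      = p + (legendreSym p (b i ^ 2 - a i * c i) : ℚ) * (p - 1) := by
    have hp2 : p ≠ 2 := by have := i.pos; omega
    have := rho_single_prime a b c i hp2 fun h => hpD (h.trans (a_dvd_Dconst a b c i))
    exact_mod_cast congrArg (Int.cast : ℤ → ℚ) this
  rw [sum_congr rfl fun i _ => hρ i, sum_add_distrib, ← sum_mul] at hw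
  simp only [sum_const, card_univ, Fintype.card_fin, nsmul_eq_mul] at hw
  set S := ∑ n : Fin g, (legendreSym p (b n ^ 2 - a n * c n) : ℚ)
  obtain ⟨hSl, hSu⟩ : -(g : ℚ) ≤ S ∧ S ≤ g := by
    simpa using abs_le.1 (abs_sum_legendreSym_le_card p univ fun n => b n ^ 2 - a n * c n)
  have hp1 : (1 : ℚ) < p := by exact_mod_cast hp.one_lt
  have hgp' : 2 * (g : ℚ) ≤ p - 1 := by
    have : 2 * (g : ℚ) + 1 ≤ p := by exact_mod_cast hgp
    linarith
  have hp0 : (0 : ℚ) < p := by linarith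
  subst hw
  refine ⟨by field_simp; ring, div_nonneg (by nlinarith) hp0.le, ?_⟩
  rw [div_lt_iff₀ hp0]
  -- the numerator is at most `2g(p - 1) + 1 ≤ (p - 1)² + 1 < p²`
  nlinarith [mul_le_mul_of_nonneg_right hSu (sub_nonneg.2 hp1.le),
    mul_le_mul_of_nonneg_right hgp' (sub_nonneg.2 hp1.le)]

/-- the formula for `ω(p)` in terms of Legendre symbols, and the bounds
`0 ≤ ω(p) < p`, for `p ∤ D`. -/
theorem stmt18 (g : ℕ) (hg : 2 ≤ g) (a b c : Fin g → ℤ)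
    (hirr : ∀ i, ¬ IsSquare (b i ^ 2 - a i * c i))
    (hD : Dconst g a b c ≠ 0)
    (p : ℕ) (hp : p.Prime) (hpD : ¬ ((p : ℤ) ∣ Dconst g a b c))
    (w : ℚ)
    (hw : w = ((∑ i : Fin g, (rho g a b c (fun j => if j = i then p else 1) : ℚ)) +
      1 - g) / (p : ℚ)) :
    w = g + (∑ n : Fin g, (@legendreSym p ⟨hp⟩ (b n ^ 2 - a n * c n) : ℚ)) -
        (1 / (p : ℚ)) *
          ((g : ℚ) - 1 + ∑ n : Fin g, (@legendreSym p ⟨hp⟩ (b n ^ 2 - a n * c n) : ℚ)) ∧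
      0 ≤ w ∧ w < p :=
  stmt18_general g a b c p hp hpD w hw
end
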